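/- arXiv:1309.3613 — 5 statements merged into one kernel-verified Lean document; each statement's English description precedes it below -/
import Mathlib

section
/- Let c_α := (Γ(1/α)/(π(α−1)))^{1/2}. For all t, t′ ≥ 0 with t + t′ > 0: ∫₀^{t∧t′} ∫_ℝ p_{t−s}(y) p_{t′−s}(y) dy ds = c_α² · 2^{(1−α)/α} · ( (t + t′)^{(α−1)/α} − |t − t′|^{(α−1)/α} ). In particular, for each fixed spatial point, the centered Gaussian random field solving the linear stochastic heat equation ∂_t v = ½ Δ_{α/2} v + space-time white noise has, in time, the covariance of c_α times a bifractional Brownian motion with parameters H = 1/2 and K = (α−1)/α. -/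
/-!
Writing `𝒞` for the cosine transform, `p_t = (2π)⁻¹ 𝒞 e^{-t|ξ|^α/2}`, so Parseval's identity
`∫ 𝒞A · 𝒞B = 2π ∫ A B` gives `∫ p_a p_b = p_{a+b}(0) = Γ(1/α)/(πα) · ((a+b)/2)^{-1/α}`.
Integrating `s ↦ ((t+t')/2 - s)^{-1/α}` over `(0, t ∧ t')`, where `(t+t')/2 - t ∧ t' = |t-t'|/2`,
gives the bifractional covariance.

Parseval's identity (for even, bounded, continuous, integrable `A`, `B`) is proved by Gaussian
damping: `∫ e^{-εy²} 𝒞A 𝒞B = ∫ A · (G_ε ⋆ B)`, where `G_ε = 𝒞 e^{-εy²}` has mass `2π` and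
concentrates at `0` as `ε → 0`, so the damped integrals tend to `2π ∫ A B`. By Fatou's lemma this
makes `(𝒞A)²` integrable, after which dominated convergence removes the damping.
-/

open MeasureTheory Real

/-- The symmetric α-stable heat kernel on ℝ:
`p_t(x) = (2π)⁻¹ ∫ cos(ξx) e^{−t|ξ|^α/2} dξ`. -/
noncomputable def stableKernel (α t x : ℝ) : ℝ :=
  (2 * Real.pi)⁻¹ * ∫ ξ : ℝ, Real.cos (ξ * x) * Real.exp (-(t * |ξ| ^ α) / 2)

open Filter Topology

noncomputable def cosineTransform (f : ℝ → ℝ) (y : ℝ) : ℝ := ∫ ξ, cos (ξ * y) * f ξ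

lemma aestronglyMeasurable_cosineTransform {f : ℝ → ℝ} (hf : AEStronglyMeasurable f) :
    AEStronglyMeasurable (cosineTransform f) :=
  ((continuous_cos.comp (continuous_snd.mul continuous_fst)).aestronglyMeasurable.mul
    hf.comp_snd : AEStronglyMeasurable (fun p : ℝ × ℝ => cos (p.2 * p.1) * f p.2)
      (volume.prod volume)).integral_prod_right'

lemma abs_cosineTransform_le {f : ℝ → ℝ} (hf : Integrable f) (y : ℝ) :
    |cosineTransform f y| ≤ ∫ ξ, |f ξ| := by
  rw [← norm_eq_abs]
  refine norm_integral_le_of_norm_le hf.abs (.of_forall fun ξ => ?_)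
  rw [norm_mul, norm_eq_abs (f ξ)]
  exact mul_le_of_le_one_left (abs_nonneg _) (abs_cos_le_one _)

noncomputable def gaussKernel (ε c : ℝ) : ℝ := √(π / ε) * exp (-c ^ 2 / (4 * ε))

lemma cosineTransform_gaussian {ε : ℝ} (hε : 0 < ε) (c : ℝ) :
    cosineTransform (fun y => exp (-(ε * y ^ 2))) c = gaussKernel ε c := by
  have hb : 0 < (ε : ℂ).re := by simpa using hε
  have hInt : Integrable fun y : ℝ => Complex.exp (Complex.I * c * y) * Complex.exp (-ε * y ^ 2) :=
    (integrable_cexp_quadratic hb (Complex.I * c) 0).congr <| .of_forall fun y => by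
      simp only [← Complex.exp_add]; ring_nf
  have hre (y : ℝ) : (Complex.exp (Complex.I * c * y) * Complex.exp (-ε * y ^ 2)).re
      = cos (y * c) * exp (-(ε * y ^ 2)) := by
    rw [← Complex.exp_add, Complex.exp_re, mul_comm]
    congr 2
    · simp [← Complex.ofReal_pow, mul_comm c]
    · simp [← Complex.ofReal_pow]
  have hsqrt : ((π / ε : ℝ) : ℂ) ^ (1 / 2 : ℂ) = (√(π / ε) : ℝ) := by
    rw [sqrt_eq_rpow, Complex.ofReal_cpow (by positivity)]; norm_num
  calc cosineTransform (fun y => exp (-(ε * y ^ 2))) c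
      = (∫ y : ℝ, Complex.exp (Complex.I * c * y) * Complex.exp (-ε * y ^ 2)).re := by
        simp_rw [cosineTransform, ← hre]; exact integral_re hInt
    _ = gaussKernel ε c := by
        rw [fourierIntegral_gaussian hb, ← Complex.ofReal_div, hsqrt]
        norm_cast

lemma MeasureTheory.Integrable.cos_mul {f : ℝ → ℝ} (hf : Integrable f) (y : ℝ) :
    Integrable fun ξ => cos (ξ * y) * f ξ :=
  hf.bdd_mul (c := 1) (by fun_prop) (.of_forall fun ξ => abs_cos_le_one _)

lemma gaussKernel_nonneg (ε c : ℝ) : 0 ≤ gaussKernel ε c := by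
  unfold gaussKernel; positivity

lemma gaussKernel_le {ε : ℝ} (hε : 0 ≤ ε) (c : ℝ) : gaussKernel ε c ≤ √(π / ε) :=
  mul_le_of_le_one_right (sqrt_nonneg _) <| exp_le_one_iff.mpr <|
    div_nonpos_of_nonpos_of_nonneg (neg_nonpos.mpr (sq_nonneg c)) (by positivity)

lemma gaussKernel_neg (ε c : ℝ) : gaussKernel ε (-c) = gaussKernel ε c := by
  simp [gaussKernel]

lemma continuous_gaussKernel (ε : ℝ) : Continuous (gaussKernel ε) := by
  unfold gaussKernel; fun_prop

lemma integral_gaussian_mul_cos_mul_cos {ε : ℝ} (hε : 0 < ε) (a b : ℝ) :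
    ∫ y, exp (-(ε * y ^ 2)) * (cos (a * y) * cos (b * y))
      = (gaussKernel ε (a - b) + gaussKernel ε (a + b)) / 2 := by
  have hg : Integrable fun y => exp (-(ε * y ^ 2)) := by
    simpa using integrable_exp_neg_mul_sq hε
  have hsplit (y : ℝ) : exp (-(ε * y ^ 2)) * (cos (a * y) * cos (b * y))
      = (cos (y * (a - b)) * exp (-(ε * y ^ 2)) + cos (y * (a + b)) * exp (-(ε * y ^ 2))) / 2 := by
    rw [mul_sub, mul_add, cos_sub, cos_add]; ring_nf
  simp_rw [hsplit]
  rw [integral_div, integral_add (hg.cos_mul _) (hg.cos_mul _)]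
  rw [← cosineTransform, ← cosineTransform, cosineTransform_gaussian hε,
    cosineTransform_gaussian hε]

noncomputable def gaussSmoothing (ε : ℝ) (B : ℝ → ℝ) (ξ : ℝ) : ℝ :=
  ∫ η, gaussKernel ε (ξ - η) * B η

lemma integrable_gaussDensity : Integrable fun u : ℝ => 2 * √π * exp (-u ^ 2) := by
  simpa using (integrable_exp_neg_mul_sq one_pos).const_mul (2 * √π)

lemma integral_gaussDensity : ∫ u : ℝ, 2 * √π * exp (-u ^ 2) = 2 * π := by
  have h : ∫ u : ℝ, exp (-u ^ 2) = √π := by simpa using integral_gaussian 1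
  rw [integral_const_mul, h, mul_assoc, mul_self_sqrt pi_pos.le]

lemma gaussSmoothing_eq_integral_comp {ε : ℝ} (hε : 0 < ε) (B : ℝ → ℝ) (ξ : ℝ) :
    gaussSmoothing ε B ξ = ∫ u, 2 * √π * exp (-u ^ 2) * B (ξ + 2 * √ε * u) := by
  have ha : 0 < 2 * √ε := by positivity
  have hkernel (u : ℝ) : 2 * √ε * gaussKernel ε (-(2 * √ε * u)) = 2 * √π * exp (-u ^ 2) := by
    have hsq : (2 * √ε) ^ 2 = 4 * ε := by rw [mul_pow, sq_sqrt hε.le]; norm_num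
    rw [gaussKernel, neg_sq, mul_pow, hsq, show -(4 * ε * u ^ 2) / (4 * ε) = -u ^ 2 by field_simp,
      ← mul_assoc, mul_assoc 2, ← sqrt_mul hε.le, mul_div_cancel₀ _ hε.ne']
  calc gaussSmoothing ε B ξ = ∫ η, gaussKernel ε (-η) * B (ξ + η) := by
        rw [gaussSmoothing, ← integral_add_left_eq_self _ ξ]; simp
    _ = 2 * √ε * ∫ u, gaussKernel ε (-(2 * √ε * u)) * B (ξ + 2 * √ε * u) := by
        rw [Measure.integral_comp_mul_left (fun η => gaussKernel ε (-η) * B (ξ + η)),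
          abs_of_pos (inv_pos.mpr ha), smul_eq_mul, ← mul_assoc, mul_inv_cancel₀ ha.ne', one_mul]
    _ = _ := by
        rw [← integral_const_mul]; simp_rw [← mul_assoc, hkernel]

section Parseval

variable {A B : ℝ → ℝ} {M : ℝ}

lemma abs_gaussSmoothing_le {ε : ℝ} (hε : 0 < ε)
    (hB : ∀ x, |B x| ≤ M) (ξ : ℝ) : |gaussSmoothing ε B ξ| ≤ 2 * π * M := by
  rw [gaussSmoothing_eq_integral_comp hε, ← integral_gaussDensity, ← integral_mul_const,
    ← norm_eq_abs]
  refine norm_integral_le_of_norm_le (integrable_gaussDensity.mul_const M) (.of_forall fun u => ?_)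
  rw [norm_mul, norm_of_nonneg (by positivity)]
  exact mul_le_mul_of_nonneg_left (hB _) (by positivity)

lemma tendsto_gaussSmoothing (hBc : Continuous B) (hB : ∀ x, |B x| ≤ M) (ξ : ℝ) :
    Tendsto (fun ε => gaussSmoothing ε B ξ) (𝓝[>] 0) (𝓝 (2 * π * B ξ)) := by
  have hlim : Tendsto (fun ε => ∫ u, 2 * √π * exp (-u ^ 2) * B (ξ + 2 * √ε * u))
      (𝓝[>] 0) (𝓝 (∫ u, 2 * √π * exp (-u ^ 2) * B (ξ + 2 * √0 * u))) := by
    refine tendsto_integral_filter_of_dominated_convergence _ (.of_forall fun ε => by fun_prop)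
      (.of_forall fun ε => .of_forall fun u => ?_) (integrable_gaussDensity.mul_const M)
      (.of_forall fun u => ?_)
    · rw [norm_mul, norm_of_nonneg (by positivity)]
      exact mul_le_mul_of_nonneg_left (hB _) (by positivity)
    · exact (Continuous.tendsto (by fun_prop) 0).mono_left nhdsWithin_le_nhds
  simp only [sqrt_zero, mul_zero, zero_mul, add_zero] at hlim
  rw [integral_mul_const, integral_gaussDensity] at hlim
  exact hlim.congr' <| eventually_nhdsWithin_of_forall fun ε hε =>
    (gaussSmoothing_eq_integral_comp hε B ξ).symm

lemma gaussSmoothing_neg (hBe : B.Even) (ε ξ : ℝ) :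
    gaussSmoothing ε B (-ξ) = gaussSmoothing ε B ξ := by
  rw [gaussSmoothing, gaussSmoothing, ← integral_neg_eq_self]
  congr 1 with η
  rw [hBe, neg_sub_neg, ← neg_sub, gaussKernel_neg]

lemma integrable_gaussKernel_mul {ε : ℝ} (hε : 0 ≤ ε) (hB : Integrable B) (ξ : ℝ) :
    Integrable fun η => gaussKernel ε (ξ - η) * B η :=
  hB.bdd_mul (c := √(π / ε)) ((continuous_gaussKernel ε).comp (by fun_prop)).aestronglyMeasurable
    (.of_forall fun η => by rw [norm_of_nonneg (gaussKernel_nonneg _ _)]; exact gaussKernel_le hε _)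

lemma integral_gaussian_mul_cosineTransform_mul (hA : Integrable A) (hB : Integrable B)
    (hBe : B.Even) {ε : ℝ} (hε : 0 < ε) :
    ∫ y, exp (-(ε * y ^ 2)) * (cosineTransform A y * cosineTransform B y)
      = ∫ ξ, A ξ * gaussSmoothing ε B ξ := by
  set F : ℝ → ℝ × ℝ → ℝ := fun y z =>
    exp (-(ε * y ^ 2)) * (A z.1 * B z.2) * (cos (z.1 * y) * cos (z.2 * y))
  have hg : Integrable fun y => exp (-(ε * y ^ 2)) := by
    simpa using integrable_exp_neg_mul_sq hε
  have hF : Integrable (Function.uncurry F) (volume.prod (volume.prod volume)) :=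
    (hg.mul_prod (hA.mul_prod hB)).mul_bdd (c := 1) (by fun_prop)
      (.of_forall fun p => by
        rw [norm_mul]; exact mul_le_one₀ (abs_cos_le_one _) (norm_nonneg _) (abs_cos_le_one _))
  have hfubini (y : ℝ) : exp (-(ε * y ^ 2)) * (cosineTransform A y * cosineTransform B y)
      = ∫ z : ℝ × ℝ, F y z := by
    rw [cosineTransform, cosineTransform, ← integral_prod_mul, ← integral_const_mul]
    congr 1 with z
    ring
  have hinner (z : ℝ × ℝ) : ∫ y, F y z
      = A z.1 * B z.2 * ((gaussKernel ε (z.1 - z.2) + gaussKernel ε (z.1 + z.2)) / 2) := by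
    simp_rw [F, mul_right_comm _ (A z.1 * B z.2)]
    rw [integral_mul_const, integral_gaussian_mul_cos_mul_cos hε, mul_comm]
  have hsmooth (ξ : ℝ) :
      ∫ η, A ξ * B η * ((gaussKernel ε (ξ - η) + gaussKernel ε (ξ + η)) / 2)
        = A ξ * gaussSmoothing ε B ξ := by
    have hsplit (η : ℝ) : A ξ * B η * ((gaussKernel ε (ξ - η) + gaussKernel ε (ξ + η)) / 2)
        = A ξ / 2 * (gaussKernel ε (ξ - η) * B η + gaussKernel ε (-ξ - η) * B η) := by
      rw [← gaussKernel_neg ε (-ξ - η)]; ring_nf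
    simp_rw [hsplit]
    rw [integral_const_mul, integral_add (integrable_gaussKernel_mul hε.le hB ξ)
      (integrable_gaussKernel_mul hε.le hB (-ξ))]
    rw [← gaussSmoothing, ← gaussSmoothing, gaussSmoothing_neg hBe]
    ring
  have hinner_integrable := hF.integral_prod_right
  simp_rw [Function.uncurry_apply_pair, hinner] at hinner_integrable
  calc ∫ y, exp (-(ε * y ^ 2)) * (cosineTransform A y * cosineTransform B y)
      = ∫ y, ∫ z : ℝ × ℝ, F y z := by simp_rw [hfubini]
    _ = ∫ z : ℝ × ℝ, ∫ y, F y z := integral_integral_swap hF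
    _ = ∫ ξ, ∫ η, A ξ * B η * ((gaussKernel ε (ξ - η) + gaussKernel ε (ξ + η)) / 2) := by
        simp_rw [hinner]; exact integral_prod _ hinner_integrable
    _ = ∫ ξ, A ξ * gaussSmoothing ε B ξ := by simp_rw [hsmooth]

lemma aestronglyMeasurable_gaussSmoothing (hB : AEStronglyMeasurable B) (ε : ℝ) :
    AEStronglyMeasurable (gaussSmoothing ε B) :=
  (((continuous_gaussKernel ε).comp (by fun_prop)).aestronglyMeasurable.mul hB.comp_snd :
    AEStronglyMeasurable (fun p : ℝ × ℝ => gaussKernel ε (p.1 - p.2) * B p.2)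
      (volume.prod volume)).integral_prod_right'

lemma tendsto_integral_mul_gaussSmoothing (hA : Integrable A) (hBc : Continuous B)
    (hB : ∀ x, |B x| ≤ M) :
    Tendsto (fun ε => ∫ ξ, A ξ * gaussSmoothing ε B ξ) (𝓝[>] 0)
      (𝓝 (2 * π * ∫ ξ, A ξ * B ξ)) := by
  rw [← integral_const_mul]
  simp_rw [mul_left_comm (2 * π)]
  refine tendsto_integral_filter_of_dominated_convergence (fun ξ => |A ξ| * (2 * π * M))
    (.of_forall fun ε => hA.aestronglyMeasurable.mul ?_) ?_ (hA.abs.mul_const _)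
    (.of_forall fun ξ => (tendsto_gaussSmoothing hBc hB ξ).const_mul (A ξ))
  · exact aestronglyMeasurable_gaussSmoothing hBc.aestronglyMeasurable ε
  · filter_upwards [self_mem_nhdsWithin] with ε hε
    refine .of_forall fun ξ => ?_
    rw [norm_mul, norm_eq_abs, norm_eq_abs]
    exact mul_le_mul_of_nonneg_left (abs_gaussSmoothing_le hε hB ξ) (abs_nonneg _)

lemma integrable_gaussian_mul_cosineTransform_mul {ε : ℝ} (hε : 0 < ε) (hA : Integrable A)
    (hB : Integrable B) :
    Integrable fun y => exp (-(ε * y ^ 2)) * (cosineTransform A y * cosineTransform B y) := by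
  have hg : Integrable fun y => exp (-(ε * y ^ 2)) := by
    simpa using integrable_exp_neg_mul_sq hε
  refine hg.mul_bdd (c := (∫ ξ, |A ξ|) * ∫ ξ, |B ξ|)
    ((aestronglyMeasurable_cosineTransform hA.aestronglyMeasurable).mul
      (aestronglyMeasurable_cosineTransform hB.aestronglyMeasurable)) (.of_forall fun y => ?_)
  rw [norm_mul, norm_eq_abs, norm_eq_abs]
  exact mul_le_mul (abs_cosineTransform_le hA y) (abs_cosineTransform_le hB y) (abs_nonneg _)
    (integral_nonneg fun ξ => abs_nonneg _)

lemma tendsto_integral_gaussian_mul_cosineTransform_mul (hA : Integrable A) (hBi : Integrable B)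
    (hBc : Continuous B) (hB : ∀ x, |B x| ≤ M) (hBe : B.Even) :
    Tendsto (fun ε => ∫ y, exp (-(ε * y ^ 2)) * (cosineTransform A y * cosineTransform B y))
      (𝓝[>] 0) (𝓝 (2 * π * ∫ ξ, A ξ * B ξ)) :=
  (tendsto_integral_mul_gaussSmoothing hA hBc hB).congr' <| eventually_nhdsWithin_of_forall
    fun _ hε => (integral_gaussian_mul_cosineTransform_mul hA hBi hBe hε).symm

lemma integrable_cosineTransform_mul_self (hAi : Integrable A) (hAc : Continuous A)
    (hA : ∀ x, |A x| ≤ M) (hAe : A.Even) :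
    Integrable fun y => cosineTransform A y * cosineTransform A y := by
  set ε : ℕ → ℝ := fun n => 1 / (n + 1)
  have hε0 : Tendsto ε atTop (𝓝 0) := tendsto_one_div_add_atTop_nhds_zero_nat
  have hεpos (n : ℕ) : 0 < ε n := by positivity
  set G : ℕ → ℝ → ℝ := fun n y =>
    exp (-(ε n * y ^ 2)) * (cosineTransform A y * cosineTransform A y)
  have hGi (n : ℕ) : Integrable (G n) :=
    integrable_gaussian_mul_cosineTransform_mul (hεpos n) hAi hAi
  have hlim : Tendsto (fun n => ∫ y, G n y) atTop (𝓝 (2 * π * ∫ ξ, A ξ * A ξ)) :=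
    (tendsto_integral_gaussian_mul_cosineTransform_mul hAi hAi hAc hA hAe).comp
      (tendsto_nhdsWithin_iff.mpr ⟨hε0, .of_forall hεpos⟩)
  have hlintegral (n : ℕ) : ∫⁻ y, ‖G n y‖ₑ = ENNReal.ofReal (∫ y, G n y) := by
    have hG0 (y : ℝ) : 0 ≤ G n y := mul_nonneg (exp_pos _).le (mul_self_nonneg _)
    simp_rw [enorm_of_nonneg (hG0 _)]
    exact (ofReal_integral_eq_lintegral_ofReal (hGi n) (.of_forall hG0)).symm
  refine integrable_of_tendsto (G := G) (.of_forall fun y => ?_) (fun n => (hGi n).1) ?_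
  · have hexp : Tendsto (fun n => exp (-(ε n * y ^ 2))) atTop (𝓝 1) := by
      simpa using ((hε0.mul_const (y ^ 2)).neg).rexp
    simpa using hexp.mul_const (cosineTransform A y * cosineTransform A y)
  · simp_rw [hlintegral]
    rw [(ENNReal.tendsto_ofReal hlim).liminf_eq]
    exact ENNReal.ofReal_ne_top

theorem integral_cosineTransform_mul (hAi : Integrable A) (hAc : Continuous A)
    (hA : ∀ x, |A x| ≤ M) (hAe : A.Even) (hBi : Integrable B) (hBc : Continuous B)
    (hB : ∀ x, |B x| ≤ M) (hBe : B.Even) :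
    ∫ y, cosineTransform A y * cosineTransform B y = 2 * π * ∫ ξ, A ξ * B ξ := by
  have hAB : Integrable fun y => cosineTransform A y * cosineTransform B y := by
    refine (((integrable_cosineTransform_mul_self hAi hAc hA hAe).add
      (integrable_cosineTransform_mul_self hBi hBc hB hBe)).div_const 2).mono'
      ((aestronglyMeasurable_cosineTransform hAi.1).mul
        (aestronglyMeasurable_cosineTransform hBi.1)) (.of_forall fun y => ?_)
    rw [norm_mul, norm_eq_abs, norm_eq_abs, Pi.add_apply]
    nlinarith [sq_nonneg (|cosineTransform A y| - |cosineTransform B y|),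
      abs_mul_abs_self (cosineTransform A y), abs_mul_abs_self (cosineTransform B y)]
  refine tendsto_nhds_unique ?_
    (tendsto_integral_gaussian_mul_cosineTransform_mul hAi hBi hBc hB hBe)
  refine tendsto_integral_filter_of_dominated_convergence _
    (.of_forall fun ε => (Continuous.aestronglyMeasurable (by fun_prop)).mul hAB.1)
    ?_ hAB.norm (.of_forall fun y => ?_)
  · filter_upwards [self_mem_nhdsWithin] with ε hε
    refine .of_forall fun y => ?_
    rw [norm_mul, norm_of_nonneg (exp_pos _).le]
    refine mul_le_of_le_one_left (norm_nonneg _) (exp_le_one_iff.mpr ?_)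
    have : 0 < ε := hε
    nlinarith [sq_nonneg y]
  · have hexp : Tendsto (fun ε => exp (-(ε * y ^ 2))) (𝓝[>] 0) (𝓝 1) := by
      have hid : Tendsto (fun ε : ℝ => ε) (𝓝[>] 0) (𝓝 0) :=
        tendsto_nhdsWithin_of_tendsto_nhds tendsto_id
      simpa using (hid.mul_const (y ^ 2)).neg.rexp
    simpa using hexp.mul_const (cosineTransform A y * cosineTransform B y)

end Parseval

lemma integral_exp_neg_mul_abs_rpow {p b : ℝ} (hp : 0 < p) (hb : 0 < b) :
    ∫ x, exp (-b * |x| ^ p) = 2 * (b ^ (-1 / p) * Gamma (1 / p + 1)) := by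
  rw [integral_comp_abs (f := fun x => exp (-b * x ^ p)), integral_exp_neg_mul_rpow hp hb]

lemma integrable_exp_neg_mul_abs_rpow {p b : ℝ} (hp : 0 < p) (hb : 0 < b) :
    Integrable fun x : ℝ => exp (-b * |x| ^ p) :=
  Integrable.of_integral_ne_zero <| by
    rw [integral_exp_neg_mul_abs_rpow hp hb]
    have := Gamma_pos_of_pos (by positivity : 0 < 1 / p + 1)
    positivity

lemma stableKernel_eq_cosineTransform (α t x : ℝ) :
    stableKernel α t x = (2 * π)⁻¹ * cosineTransform (fun ξ => exp (-(t / 2) * |ξ| ^ α)) x := by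
  simp only [stableKernel, cosineTransform, neg_div, neg_mul, mul_div_right_comm]

variable {α : ℝ}

lemma integral_stableKernel_mul_stableKernel (hα : 0 < α) {a b : ℝ} (ha : 0 < a) (hb : 0 < b) :
    ∫ y, stableKernel α a y * stableKernel α b y = stableKernel α (a + b) 0 := by
  have hsymbol {c : ℝ} (hc : 0 < c) :
      Integrable (fun ξ => exp (-(c / 2) * |ξ| ^ α)) ∧
        Continuous (fun ξ => exp (-(c / 2) * |ξ| ^ α)) ∧
        (∀ ξ, |exp (-(c / 2) * |ξ| ^ α)| ≤ 1) ∧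
        Function.Even (fun ξ => exp (-(c / 2) * |ξ| ^ α)) := by
    refine ⟨integrable_exp_neg_mul_abs_rpow hα (half_pos hc), by fun_prop (disch := positivity),
      fun ξ => ?_, fun ξ => by simp only [abs_neg]⟩
    rw [abs_of_pos (exp_pos _), exp_le_one_iff, neg_mul, neg_nonpos]
    positivity
  obtain ⟨haI, haC, haB, haE⟩ := hsymbol ha
  obtain ⟨hbI, hbC, hbB, hbE⟩ := hsymbol hb
  simp_rw [stableKernel_eq_cosineTransform, mul_mul_mul_comm]
  rw [integral_const_mul, integral_cosineTransform_mul haI haC haB haE hbI hbC hbB hbE]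
  simp_rw [← exp_add, ← add_mul, ← neg_add, ← add_div, cosineTransform, mul_zero, cos_zero, one_mul]
  field_simp

lemma stableKernel_apply_zero (hα : 0 < α) {t : ℝ} (ht : 0 < t) :
    stableKernel α t 0 = Gamma (1 / α) / (π * α) * (t / 2) ^ (-1 / α) := by
  simp_rw [stableKernel_eq_cosineTransform, cosineTransform, mul_zero, cos_zero, one_mul]
  rw [integral_exp_neg_mul_abs_rpow hα (half_pos ht), Gamma_add_one (by positivity)]
  field_simp

lemma intervalIntegral_sub_rpow {r : ℝ} (hr : -1 < r) (a m : ℝ) :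
    ∫ s in 0..m, (a - s) ^ r = (a ^ (r + 1) - (a - m) ^ (r + 1)) / (r + 1) := by
  rw [intervalIntegral.integral_comp_sub_left (fun x => x ^ r), integral_rpow (.inl hr), sub_zero]

theorem stmt_1_general (α : ℝ) (hα : α ∈ Set.Ioc (1 : ℝ) 2)
    (t t' : ℝ) (ht : 0 ≤ t) (ht' : 0 ≤ t') :
    ∫ s in Set.Ioc (0 : ℝ) (min t t'),
        ∫ y : ℝ, stableKernel α (t - s) y * stableKernel α (t' - s) y
      = ((Real.Gamma (1 / α) / (Real.pi * (α - 1))) ^ (1 / 2 : ℝ)) ^ 2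
          * 2 ^ ((1 - α) / α)
          * ((t + t') ^ ((α - 1) / α) - |t - t'| ^ ((α - 1) / α)) := by
  have hα0 : 0 < α := zero_lt_one.trans hα.1
  have hα1 : 0 < α - 1 := sub_pos.mpr hα.1
  have hkernel : ∀ s ∈ Set.Ioo 0 (min t t'),
      ∫ y, stableKernel α (t - s) y * stableKernel α (t' - s) y
        = Gamma (1 / α) / (π * α) * ((t + t') / 2 - s) ^ (-1 / α) := by
    rintro s ⟨-, hs⟩
    have hst : 0 < t - s := by linarith [min_le_left t t']
    have hst' : 0 < t' - s := by linarith [min_le_right t t']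
    rw [integral_stableKernel_mul_stableKernel hα0 hst hst',
      stableKernel_apply_zero hα0 (by positivity)]
    ring_nf
  have hmin : (t + t') / 2 - min t t' = |t - t'| / 2 := by
    rw [← max_sub_min_eq_abs', ← min_add_max t t']; ring
  have hr : -1 < -1 / α := by rw [neg_div, neg_lt_neg_iff, div_lt_one hα0]; exact hα.1
  have hK : -1 / α + 1 = (α - 1) / α := by field_simp; ring
  rw [integral_Ioc_eq_integral_Ioo, setIntegral_congr_fun measurableSet_Ioo hkernel,
    ← integral_Ioc_eq_integral_Ioo, ← intervalIntegral.integral_of_le (le_min ht ht'),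
    intervalIntegral.integral_const_mul, intervalIntegral_sub_rpow hr, hmin, hK,
    ← sqrt_eq_rpow, sq_sqrt (by positivity), div_rpow (by positivity) zero_le_two,
    div_rpow (abs_nonneg _) zero_le_two]
  rw [show (1 - α) / α = -((α - 1) / α) by ring, rpow_neg zero_le_two]
  field_simp

/-- With `c_α := (Γ(1/α)/(π(α−1)))^{1/2}`, for all `t, t′ ≥ 0` with `t + t′ > 0`:
`∫₀^{t∧t′} ∫_ℝ p_{t−s}(y) p_{t′−s}(y) dy ds
  = c_α² · 2^{(1−α)/α} · ((t + t′)^{(α−1)/α} − |t − t′|^{(α−1)/α})`.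
This says that, at each fixed spatial point, the solution of the linear stochastic
heat equation driven by space-time white noise has in time the covariance of
`c_α` times a bifractional Brownian motion with parameters `H = 1/2`, `K = (α−1)/α`. -/
theorem stmt_1 (α : ℝ) (hα : α ∈ Set.Ioc (1 : ℝ) 2)
    (t t' : ℝ) (ht : 0 ≤ t) (ht' : 0 ≤ t') (htt' : 0 < t + t') :
    ∫ s in Set.Ioc (0 : ℝ) (min t t'),
        ∫ y : ℝ, stableKernel α (t - s) y * stableKernel α (t' - s) y
      = ((Real.Gamma (1 / α) / (Real.pi * (α - 1))) ^ (1 / 2 : ℝ)) ^ 2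
          * 2 ^ ((1 - α) / α)
          * ((t + t') ^ ((α - 1) / α) - |t - t'| ^ ((α - 1) / α)) :=
  stmt_1_general α hα t t' ht ht'
end

section
/- Let K ∈ (0,1). The kernel (x, y) ↦ x^K + y^K − (x + y)^K on [0, ∞) × [0, ∞) is positive semidefinite: for every n ∈ ℕ, every x₁, …, x_n ≥ 0 and every c₁, …, c_n ∈ ℝ, one has ∑_{i=1}^n ∑_{j=1}^n c_i c_j ( x_i^K + x_j^K − (x_i + x_j)^K ) ≥ 0. -/
open MeasureTheory Real Set
open scoped ENNReal

namespace Stmt6Aux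

/-- the basic integrand -/
noncomputable def f (K x u : ℝ) : ℝ := (1 - Real.exp (-(x * u))) * u ^ (-1 - K)

lemma one_sub_exp_neg_le (t : ℝ) : 1 - Real.exp (-t) ≤ t := by
  have := Real.add_one_le_exp (-t); linarith

lemma one_sub_exp_neg_nonneg {t : ℝ} (ht : 0 ≤ t) : 0 ≤ 1 - Real.exp (-t) := by
  have : Real.exp (-t) ≤ 1 := Real.exp_le_one_iff.mpr (by linarith)
  linarith

lemma contOn (K x : ℝ) : ContinuousOn (fun u : ℝ => f K x u) (Ioi 0) := by
  apply ContinuousOn.mul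
  · exact (continuous_const.sub
      (Real.continuous_exp.comp (continuous_const.mul continuous_id).neg)).continuousOn
  · intro u hu
    exact (Real.continuousAt_rpow_const u _ (Or.inl (ne_of_gt hu))).continuousWithinAt

lemma integrable_f {K : ℝ} (hK : K ∈ Ioo (0:ℝ) 1) {x : ℝ} (hx : 0 ≤ x) :
    IntegrableOn (fun u : ℝ => f K x u) (Ioi 0) := by
  have hsplit : Ioi (0:ℝ) = Ioc 0 1 ∪ Ioi 1 := (Ioc_union_Ioi_eq_Ioi zero_le_one).symm
  rw [hsplit]
  apply IntegrableOn.union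
  · -- near 0 : dominate by x * u ^ (-K)
    have hg : IntegrableOn (fun u : ℝ => x * u ^ (-K)) (Ioc (0:ℝ) 1) := by
      have : IntervalIntegrable (fun u : ℝ => u ^ (-K)) volume 0 1 :=
        intervalIntegral.intervalIntegrable_rpow' (by linarith [hK.2])
      exact ((intervalIntegrable_iff_integrableOn_Ioc_of_le zero_le_one).mp this).const_mul x
    refine hg.integrable.mono ?_ ?_
    · exact ((contOn K x).aestronglyMeasurable measurableSet_Ioi).mono_measure
        (Measure.restrict_mono Ioc_subset_Ioi_self le_rfl)
    · filter_upwards [ae_restrict_mem measurableSet_Ioc] with u hu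
      have hu0 : 0 < u := hu.1
      have h1 : 0 ≤ 1 - Real.exp (-(x * u)) :=
        one_sub_exp_neg_nonneg (mul_nonneg hx hu0.le)
      have h2 : (0:ℝ) ≤ u ^ (-1 - K) := Real.rpow_nonneg hu0.le _
      have h3 : 1 - Real.exp (-(x * u)) ≤ x * u := one_sub_exp_neg_le _
      have h4 : u * u ^ (-1 - K) = u ^ (-K) := by
        rw [show u * u ^ (-1 - K) = u ^ (1:ℝ) * u ^ (-1 - K) by rw [Real.rpow_one],
          ← Real.rpow_add hu0]
        congr 1; ring
      have h5 : f K x u ≤ x * u ^ (-K) := by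
        calc f K x u ≤ (x * u) * u ^ (-1 - K) := mul_le_mul_of_nonneg_right h3 h2
        _ = x * (u * u ^ (-1 - K)) := by ring
        _ = x * u ^ (-K) := by rw [h4]
      have h6 : 0 ≤ f K x u := mul_nonneg h1 h2
      rw [Real.norm_eq_abs, Real.norm_eq_abs, abs_of_nonneg h6,
        abs_of_nonneg (h6.trans h5)]
      exact h5
  · -- near ∞ : dominate by u ^ (-1-K)
    have hg : IntegrableOn (fun u : ℝ => u ^ (-1 - K)) (Ioi (1:ℝ)) :=
      integrableOn_Ioi_rpow_of_lt (by linarith [hK.1]) one_pos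
    refine hg.integrable.mono ?_ ?_
    · exact ((contOn K x).aestronglyMeasurable measurableSet_Ioi).mono_measure
        (Measure.restrict_mono (Ioi_subset_Ioi zero_le_one) le_rfl)
    · filter_upwards [ae_restrict_mem measurableSet_Ioi] with u hu
      have hu0 : 0 < u := lt_trans one_pos hu
      have h1 : 0 ≤ 1 - Real.exp (-(x * u)) :=
        one_sub_exp_neg_nonneg (mul_nonneg hx hu0.le)
      have h1' : 1 - Real.exp (-(x * u)) ≤ 1 := by
        have := Real.exp_pos (-(x * u)); linarith
      have h2 : (0:ℝ) ≤ u ^ (-1 - K) := Real.rpow_nonneg hu0.le _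
      have h6 : 0 ≤ f K x u := mul_nonneg h1 h2
      rw [Real.norm_eq_abs, Real.norm_eq_abs, abs_of_nonneg h6, abs_of_nonneg h2]
      calc f K x u ≤ 1 * u ^ (-1 - K) := mul_le_mul_of_nonneg_right h1' h2
      _ = u ^ (-1 - K) := one_mul _

/-- the normalizing constant -/
noncomputable def C (K : ℝ) : ℝ := ∫ t in Ioi (0:ℝ), (1 - Real.exp (-t)) * t ^ (-1 - K)

lemma C_pos {K : ℝ} (hK : K ∈ Ioo (0:ℝ) 1) : 0 < C K := by
  have hint : IntegrableOn (fun t : ℝ => (1 - Real.exp (-t)) * t ^ (-1 - K)) (Ioi 0) := by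
    have h := integrable_f hK (le_of_lt one_pos) (K := K)
    exact h.congr_fun (fun t _ => by simp [f]) measurableSet_Ioi
  have hnn : 0 ≤ᵐ[volume.restrict (Ioi (0:ℝ))]
      fun t : ℝ => (1 - Real.exp (-t)) * t ^ (-1 - K) := by
    filter_upwards [ae_restrict_mem measurableSet_Ioi] with t ht
    exact mul_nonneg (one_sub_exp_neg_nonneg (le_of_lt ht)) (Real.rpow_nonneg (le_of_lt ht) _)
  rw [C, setIntegral_pos_iff_support_of_nonneg_ae hnn hint]
  have hsub : Ioi (0:ℝ) ⊆
      Function.support (fun t : ℝ => (1 - Real.exp (-t)) * t ^ (-1 - K)) ∩ Ioi 0 := by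
    intro t ht
    refine ⟨?_, ht⟩
    have h1 : 0 < 1 - Real.exp (-t) := by
      have : Real.exp (-t) < 1 := Real.exp_lt_one_iff.mpr (by linarith [mem_Ioi.mp ht])
      linarith
    have h2 : 0 < t ^ (-1 - K) := Real.rpow_pos_of_pos (mem_Ioi.mp ht) _
    exact ne_of_gt (mul_pos h1 h2)
  calc (0:ℝ≥0∞) < volume (Ioi (0:ℝ)) := by simp [Real.volume_Ioi]
  _ ≤ _ := measure_mono hsub

lemma scaling {K : ℝ} (hK : K ∈ Ioo (0:ℝ) 1) {x : ℝ} (hx : 0 ≤ x) :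
    ∫ u in Ioi (0:ℝ), f K x u = x ^ K * C K := by
  rcases eq_or_lt_of_le hx with h0 | h0
  · simp [f, ← h0, Real.zero_rpow (ne_of_gt hK.1)]
  · have key := integral_comp_mul_left_Ioi
      (fun t : ℝ => (1 - Real.exp (-t)) * t ^ (-1 - K)) 0 h0
    rw [mul_zero] at key
    have congr1 : ∫ u in Ioi (0:ℝ), (1 - Real.exp (-(x * u))) * (x * u) ^ (-1 - K)
        = ∫ u in Ioi (0:ℝ), x ^ (-1 - K) * f K x u := by
      refine setIntegral_congr_fun measurableSet_Ioi (fun u hu => ?_)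
      rw [f, Real.mul_rpow h0.le (le_of_lt hu)]
      ring
    rw [congr1, MeasureTheory.integral_const_mul] at key
    -- key : x ^ (-1-K) * ∫ f = x⁻¹ • C K
    have hxK : x ^ (1 + K) * x ^ (-1 - K) = 1 := by
      rw [← Real.rpow_add h0, show (1:ℝ) + K + (-1 - K) = 0 by ring, Real.rpow_zero]
    have hstep : ∫ u in Ioi (0:ℝ), f K x u
        = x ^ (1 + K) * (x ^ (-1 - K) * ∫ u in Ioi (0:ℝ), f K x u) := by
      rw [← mul_assoc, hxK, one_mul]
    rw [hstep, key, smul_eq_mul, ← mul_assoc]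
    congr 1
    rw [show x⁻¹ = x ^ (-1:ℝ) by rw [Real.rpow_neg_one], ← Real.rpow_add h0]
    congr 1; ring

lemma prod_eq (K x y u : ℝ) :
    (1 - Real.exp (-(x * u))) * (1 - Real.exp (-(y * u))) * u ^ (-1 - K)
      = f K x u + f K y u - f K (x + y) u := by
  simp only [f]
  rw [show -((x + y) * u) = -(x * u) + -(y * u) by ring, Real.exp_add]
  ring

lemma prod_integrable {K : ℝ} (hK : K ∈ Ioo (0:ℝ) 1) {x y : ℝ} (hx : 0 ≤ x) (hy : 0 ≤ y) :
    IntegrableOn (fun u : ℝ =>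
      (1 - Real.exp (-(x * u))) * (1 - Real.exp (-(y * u))) * u ^ (-1 - K)) (Ioi 0) := by
  have h : IntegrableOn (fun u : ℝ => f K x u + f K y u - f K (x + y) u) (Ioi 0) :=
    ((integrable_f hK hx).add (integrable_f hK hy)).sub (integrable_f hK (add_nonneg hx hy))
  exact h.congr_fun (fun u _ => (prod_eq K x y u).symm) measurableSet_Ioi

lemma prod_integral {K : ℝ} (hK : K ∈ Ioo (0:ℝ) 1) {x y : ℝ} (hx : 0 ≤ x) (hy : 0 ≤ y) :
    ∫ u in Ioi (0:ℝ),
        (1 - Real.exp (-(x * u))) * (1 - Real.exp (-(y * u))) * u ^ (-1 - K)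
      = (x ^ K + y ^ K - (x + y) ^ K) * C K := by
  have h1 : Integrable (fun u : ℝ => f K x u + f K y u) (volume.restrict (Ioi 0)) :=
    (integrable_f hK hx).add (integrable_f hK hy)
  have h2 : Integrable (fun u : ℝ => f K (x + y) u) (volume.restrict (Ioi 0)) :=
    integrable_f hK (add_nonneg hx hy)
  calc ∫ u in Ioi (0:ℝ),
        (1 - Real.exp (-(x * u))) * (1 - Real.exp (-(y * u))) * u ^ (-1 - K)
      = ∫ u in Ioi (0:ℝ), (f K x u + f K y u - f K (x + y) u) :=
        setIntegral_congr_fun measurableSet_Ioi (fun u _ => prod_eq K x y u)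
    _ = (∫ u in Ioi (0:ℝ), (f K x u + f K y u)) - ∫ u in Ioi (0:ℝ), f K (x + y) u :=
        integral_sub h1 h2
    _ = ((∫ u in Ioi (0:ℝ), f K x u) + ∫ u in Ioi (0:ℝ), f K y u)
          - ∫ u in Ioi (0:ℝ), f K (x + y) u := by
        rw [integral_add (integrable_f hK hx) (integrable_f hK hy)]
    _ = (x ^ K + y ^ K - (x + y) ^ K) * C K := by
        rw [scaling hK hx, scaling hK hy, scaling hK (add_nonneg hx hy)]; ring

end Stmt6Aux

/-- For `K ∈ (0,1)`, the kernel `(x, y) ↦ x^K + y^K − (x + y)^K` on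
`[0,∞) × [0,∞)` is positive semidefinite. -/
theorem stmt_6 (K : ℝ) (hK : K ∈ Set.Ioo (0 : ℝ) 1)
    (n : ℕ) (x : Fin n → ℝ) (hx : ∀ i, 0 ≤ x i) (c : Fin n → ℝ) :
    0 ≤ ∑ i, ∑ j, c i * c j * (x i ^ K + x j ^ K - (x i + x j) ^ K) := by
  classical
  have hC : 0 < Stmt6Aux.C K := Stmt6Aux.C_pos hK
  set P : Fin n → Fin n → ℝ → ℝ := fun i j u =>
    c i * c j * ((1 - Real.exp (-(x i * u))) * (1 - Real.exp (-(x j * u))) * u ^ (-1 - K))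
    with hP
  have hPint : ∀ i j, IntegrableOn (P i j) (Set.Ioi 0) := fun i j =>
    (Stmt6Aux.prod_integrable hK (hx i) (hx j)).const_mul _
  have step1 : ∀ i j, c i * c j * (x i ^ K + x j ^ K - (x i + x j) ^ K) * Stmt6Aux.C K
      = ∫ u in Set.Ioi (0:ℝ), P i j u := by
    intro i j
    have : ∫ u in Set.Ioi (0:ℝ), P i j u
        = c i * c j * ((x i ^ K + x j ^ K - (x i + x j) ^ K) * Stmt6Aux.C K) := by
      rw [hP]
      simp only
      rw [MeasureTheory.integral_const_mul, Stmt6Aux.prod_integral hK (hx i) (hx j)]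
    rw [this]; ring
  have key : (∑ i, ∑ j, c i * c j * (x i ^ K + x j ^ K - (x i + x j) ^ K)) * Stmt6Aux.C K
      = ∫ u in Set.Ioi (0:ℝ),
          (∑ i, c i * (1 - Real.exp (-(x i * u)))) ^ 2 * u ^ (-1 - K) := by
    calc (∑ i, ∑ j, c i * c j * (x i ^ K + x j ^ K - (x i + x j) ^ K)) * Stmt6Aux.C K
        = ∑ i, ∑ j, (c i * c j * (x i ^ K + x j ^ K - (x i + x j) ^ K) * Stmt6Aux.C K) := by
          simp only [Finset.sum_mul]
      _ = ∑ i, ∑ j, ∫ u in Set.Ioi (0:ℝ), P i j u :=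
          Finset.sum_congr rfl fun i _ => Finset.sum_congr rfl fun j _ => step1 i j
      _ = ∑ i, ∫ u in Set.Ioi (0:ℝ), ∑ j, P i j u :=
          Finset.sum_congr rfl fun i _ =>
            (MeasureTheory.integral_finset_sum _ fun j _ => hPint i j).symm
      _ = ∫ u in Set.Ioi (0:ℝ), ∑ i, ∑ j, P i j u :=
          (MeasureTheory.integral_finset_sum _ fun i _ =>
            integrable_finset_sum _ fun j _ => hPint i j).symm
      _ = ∫ u in Set.Ioi (0:ℝ),
            (∑ i, c i * (1 - Real.exp (-(x i * u)))) ^ 2 * u ^ (-1 - K) := by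
          refine setIntegral_congr_fun measurableSet_Ioi fun u _ => ?_
          rw [sq, Finset.sum_mul_sum]
          simp only [Finset.sum_mul]
          refine Finset.sum_congr rfl fun i _ => Finset.sum_congr rfl fun j _ => ?_
          rw [hP]; ring
  have hRHS : 0 ≤ ∫ u in Set.Ioi (0:ℝ),
      (∑ i, c i * (1 - Real.exp (-(x i * u)))) ^ 2 * u ^ (-1 - K) :=
    setIntegral_nonneg measurableSet_Ioi fun u hu =>
      mul_nonneg (sq_nonneg _) (Real.rpow_nonneg (le_of_lt hu) _)
  have h : 0 ≤ (∑ i, ∑ j, c i * c j * (x i ^ K + x j ^ K - (x i + x j) ^ K)) * Stmt6Aux.C K := by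
    rw [key]; exact hRHS
  nlinarith [h, hC]
end

section
/- There exists a finite constant C (depending only on α) such that for all ε ∈ (0,1): ∫₀^ε ∫₀^1 p_s(y)² y^{α−1} dy ds ≤ C ε^{2(α−1)/α}. -/
open MeasureTheory Real

/-!
Substituting `ξ ↦ s^{-1/α} ξ` gives the scaling `p_s(y) = s^{-1/α} p_1(s^{-1/α} y)`, hence
`∫₀^∞ p_s(y)² y^{α-1} dy = s^{(α-2)/α} ∫₀^∞ p_1(u)² u^{α-1} du`. The last integral is
finite because `p_1` is bounded and, after two integrations by parts in its cosine-transform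
representation, `|p_1(u)| ≤ C u⁻²`. Integrating `s^{(α-2)/α}` over `(0, ε)` gives
`ε^{2(α-1)/α}`.
-/

open Set Filter Topology

lemma MeasureTheory.IntegrableOn.cos_mul {g : ℝ → ℝ} {s : Set ℝ} (hg : IntegrableOn g s)
    (y : ℝ) :
    IntegrableOn (fun x ↦ cos (x * y) * g x) s :=
  Integrable.bdd_mul hg (by fun_prop : Continuous fun x ↦ cos (x * y)).aestronglyMeasurable
    (ae_of_all _ fun x ↦ by simpa using abs_cos_le_one (x * y))

lemma tendsto_rpow_mul_exp_neg_mul_rpow_atTop (s : ℝ) {b p : ℝ} (hp : 1 < p) (hb : 0 < b) :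
    Tendsto (fun x : ℝ ↦ x ^ s * exp (-b * x ^ p)) atTop (𝓝 0) :=
  (rpow_mul_exp_neg_mul_rpow_isLittleO_exp_neg s hp hb).trans_tendsto
    (by simpa using tendsto_rpow_mul_exp_neg_mul_atTop_nhds_zero 0 (1 / 2) one_half_pos)

lemma integral_Ioi_cos_mul_eq_of_hasDerivAt {f f' f'' : ℝ → ℝ} {y : ℝ} (hy : y ≠ 0)
    (hf0 : ContinuousWithinAt f (Ici 0) 0) (hf'0 : ContinuousWithinAt f' (Ici 0) 0)
    (hf : ∀ x ∈ Ioi 0, HasDerivAt f (f' x) x) (hf' : ∀ x ∈ Ioi 0, HasDerivAt f' (f'' x) x)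
    (hf_top : Tendsto f atTop (𝓝 0)) (hf'_top : Tendsto f' atTop (𝓝 0))
    (hfi : IntegrableOn (fun x ↦ cos (x * y) * f x) (Ioi 0))
    (hf''i : IntegrableOn (fun x ↦ cos (x * y) * f'' x) (Ioi 0)) :
    ∫ x in Ioi 0, cos (x * y) * f x = -(f' 0 + ∫ x in Ioi 0, cos (x * y) * f'' x) / y ^ 2 := by
  set F : ℝ → ℝ := fun x ↦ sin (x * y) / y * f x + cos (x * y) / y ^ 2 * f' x
  have hF : ∀ x ∈ Ioi 0, HasDerivAt F (cos (x * y) * f x + cos (x * y) * f'' x / y ^ 2) x := by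
    intro x hx
    have hsin := (hasDerivAt_mul_const y).sin (x := x)
    have hcos := (hasDerivAt_mul_const y).cos (x := x)
    refine (((hsin.div_const y).mul (hf x hx)).add
      ((hcos.div_const (y ^ 2)).mul (hf' x hx))).congr_deriv ?_
    field_simp
    ring
  have hF0 : ContinuousWithinAt F (Ici 0) 0 := by
    refine ((ContinuousWithinAt.mul ?_ hf0).add (ContinuousWithinAt.mul ?_ hf'0)) <;>
      fun_prop
  have hF_top : Tendsto F atTop (𝓝 0) := by
    have hbound : Tendsto (fun x ↦ |f x| / |y| + |f' x| / y ^ 2) atTop (𝓝 0) := by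
      simpa using (hf_top.abs.div_const |y|).add (hf'_top.abs.div_const (y ^ 2))
    refine squeeze_zero_norm (fun x ↦ (norm_add_le _ _).trans (add_le_add ?_ ?_)) hbound
    · rw [norm_mul, norm_div, Real.norm_eq_abs, Real.norm_eq_abs, Real.norm_eq_abs]
      exact mul_le_mul_of_nonneg_right (div_le_div_of_nonneg_right (abs_sin_le_one _)
        (abs_nonneg _)) (abs_nonneg _) |>.trans_eq (by ring)
    · rw [norm_mul, norm_div, Real.norm_eq_abs, Real.norm_eq_abs, Real.norm_eq_abs, abs_pow,
        sq_abs]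
      exact mul_le_mul_of_nonneg_right (div_le_div_of_nonneg_right (abs_cos_le_one _)
        (by positivity)) (abs_nonneg _) |>.trans_eq (by ring)
  have key := integral_Ioi_of_hasDerivAt_of_tendsto hF0 hF (hfi.add (hf''i.div_const _)) hF_top
  rw [integral_add hfi (hf''i.div_const _), integral_div] at key
  simp only [F, zero_mul, sin_zero, cos_zero, zero_div, zero_add, zero_sub] at key
  calc _ = -(1 / y ^ 2 * f' 0) - (∫ x in Ioi 0, cos (x * y) * f'' x) / y ^ 2 := by linarith
    _ = _ := by ring

lemma setIntegral_Ioc_zero_rpow {r ε : ℝ} (hr : -1 < r) (hε : 0 ≤ ε) :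
    ∫ s in Ioc 0 ε, s ^ r = ε ^ (r + 1) / (r + 1) := by
  rw [← intervalIntegral.integral_of_le hε, integral_rpow (Or.inl hr),
    zero_rpow (by linarith), sub_zero]

section Profile

variable {α b : ℝ}

lemma hasDerivAt_exp_neg_mul_rpow {x : ℝ} (hx : 0 < x) :
    HasDerivAt (fun x ↦ exp (-b * x ^ α))
      (-(b * α) * (x ^ (α - 1) * exp (-b * x ^ α))) x := by
  refine ((hasDerivAt_rpow_const (Or.inl hx.ne')).const_mul (-b)).exp.congr_deriv ?_
  ring

lemma hasDerivAt_rpow_sub_one_mul_exp_neg_mul_rpow {x : ℝ} (hx : 0 < x) :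
    HasDerivAt (fun x ↦ -(b * α) * (x ^ (α - 1) * exp (-b * x ^ α)))
      ((b * α) ^ 2 * (x ^ (2 * α - 2) * exp (-b * x ^ α))
        - b * α * (α - 1) * (x ^ (α - 2) * exp (-b * x ^ α))) x := by
  refine (((hasDerivAt_rpow_const (Or.inl hx.ne')).mul
    (hasDerivAt_exp_neg_mul_rpow hx)).const_mul _).congr_deriv ?_
  have h2 : x ^ (2 * α - 2) = x ^ (α - 1) * x ^ (α - 1) := by
    rw [← rpow_add hx]; ring_nf
  rw [h2, show α - 2 = α - 1 - 1 by ring]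
  ring

lemma integrableOn_exp_neg_mul_rpow (hα : 0 < α) (hb : 0 < b) :
    IntegrableOn (fun x ↦ exp (-b * x ^ α)) (Ioi 0) := by
  simpa using integrableOn_rpow_mul_exp_neg_mul_rpow neg_one_lt_zero hα hb

lemma integrableOn_deriv2_exp_neg_mul_rpow (hα : 1 < α) (hb : 0 < b) :
    IntegrableOn (fun x ↦ (b * α) ^ 2 * (x ^ (2 * α - 2) * exp (-b * x ^ α))
      - b * α * (α - 1) * (x ^ (α - 2) * exp (-b * x ^ α))) (Ioi 0) :=
  ((integrableOn_rpow_mul_exp_neg_mul_rpow (by linarith) (by linarith) hb).const_mul _).sub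
    ((integrableOn_rpow_mul_exp_neg_mul_rpow (by linarith) (by linarith) hb).const_mul _)

-- The integrand on the right is the second derivative of `exp (-b * x ^ α)`.
lemma integral_Ioi_cos_mul_exp_neg_mul_rpow (hα : 1 < α) (hb : 0 < b) {y : ℝ} (hy : y ≠ 0) :
    ∫ x in Ioi 0, cos (x * y) * exp (-b * x ^ α) =
      -(∫ x in Ioi 0, cos (x * y) * ((b * α) ^ 2 * (x ^ (2 * α - 2) * exp (-b * x ^ α))
        - b * α * (α - 1) * (x ^ (α - 2) * exp (-b * x ^ α)))) / y ^ 2 := by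
  have hα1 : 0 < α - 1 := by linarith
  have hφ_int := integrableOn_exp_neg_mul_rpow (by linarith : 0 < α) hb
  rw [integral_Ioi_cos_mul_eq_of_hasDerivAt hy
    (Continuous.continuousWithinAt (by fun_prop (disch := linarith)))
    (Continuous.continuousWithinAt (by fun_prop (disch := linarith)))
    (fun x hx ↦ hasDerivAt_exp_neg_mul_rpow hx)
    (fun x hx ↦ hasDerivAt_rpow_sub_one_mul_exp_neg_mul_rpow hx)
    (by simpa using tendsto_rpow_mul_exp_neg_mul_rpow_atTop 0 hα hb)
    (by simpa using (tendsto_rpow_mul_exp_neg_mul_rpow_atTop (α - 1) hα hb).const_mul (-(b * α)))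
    (hφ_int.cos_mul y) ((integrableOn_deriv2_exp_neg_mul_rpow hα hb).cos_mul y)]
  simp [zero_rpow hα1.ne']

lemma exists_abs_integral_Ioi_cos_mul_exp_neg_mul_rpow_mul_sq_le (hα : 1 < α) (hb : 0 < b) :
    ∃ C, ∀ y, |∫ x in Ioi 0, cos (x * y) * exp (-b * x ^ α)| * y ^ 2 ≤ C := by
  set φ'' : ℝ → ℝ := fun x ↦ (b * α) ^ 2 * (x ^ (2 * α - 2) * exp (-b * x ^ α))
    - b * α * (α - 1) * (x ^ (α - 2) * exp (-b * x ^ α))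
  have hφ''_int : IntegrableOn φ'' (Ioi 0) := integrableOn_deriv2_exp_neg_mul_rpow hα hb
  refine ⟨∫ x in Ioi 0, |φ'' x|, fun y ↦ ?_⟩
  rcases eq_or_ne y 0 with rfl | hy
  · simpa using setIntegral_nonneg measurableSet_Ioi fun x _ ↦ abs_nonneg (φ'' x)
  rw [integral_Ioi_cos_mul_exp_neg_mul_rpow hα hb hy, abs_div, abs_neg, abs_sq,
    div_mul_cancel₀ _ (pow_ne_zero 2 hy), ← Real.norm_eq_abs]
  refine norm_integral_le_of_norm_le hφ''_int.abs (ae_of_all _ fun x ↦ ?_)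
  rw [norm_mul, Real.norm_eq_abs, Real.norm_eq_abs]
  exact mul_le_of_le_one_left (abs_nonneg _) (abs_cos_le_one _)

end Profile

lemma stableKernel_eq_integral_Ioi (α t y : ℝ) :
    stableKernel α t y = π⁻¹ * ∫ x in Ioi 0, cos (x * y) * exp (-(t / 2) * x ^ α) := by
  have h_even : ∀ ξ : ℝ, cos (ξ * y) * exp (-(t * |ξ| ^ α) / 2)
      = cos (|ξ| * y) * exp (-(t / 2) * |ξ| ^ α) := fun ξ ↦ by
    rw [show -(t * |ξ| ^ α) / 2 = -(t / 2) * |ξ| ^ α by ring]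
    rcases abs_choice ξ with h | h <;> simp [h]
  rw [stableKernel, funext h_even,
    integral_comp_abs (f := fun x ↦ cos (x * y) * exp (-(t / 2) * x ^ α))]
  ring

lemma stableKernel_eq_rpow_mul_stableKernel_one {α s : ℝ} (hα : α ≠ 0) (hs : 0 < s)
    (y : ℝ) :
    stableKernel α s y = s ^ (-1 / α) * stableKernel α 1 (s ^ (-1 / α) * y) := by
  set c := s ^ (-1 / α)
  have hc : 0 < c := rpow_pos_of_pos hs _
  have hcα : c ^ α = s⁻¹ := by
    rw [← rpow_mul hs.le, div_mul_cancel₀ _ hα, rpow_neg_one]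
  have h_subst := integral_comp_mul_left_Ioi
    (fun x ↦ cos (x * y) * exp (-(s / 2) * x ^ α)) 0 hc
  rw [mul_zero, smul_eq_mul] at h_subst
  rw [stableKernel_eq_integral_Ioi, stableKernel_eq_integral_Ioi,
    ← mul_inv_cancel_left₀ hc.ne' (∫ x in Ioi 0, _), ← h_subst]
  have h_integrand : ∀ x ∈ Ioi (0 : ℝ), cos (c * x * y) * exp (-(s / 2) * (c * x) ^ α)
      = cos (x * (c * y)) * exp (-(1 / 2) * x ^ α) := fun x hx ↦ by
    rw [mul_rpow hc.le hx.le, hcα]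
    field_simp
  rw [setIntegral_congr_fun measurableSet_Ioi h_integrand]
  ring

lemma abs_stableKernel_le {α t : ℝ} (hα : 0 < α) (ht : 0 < t) (y : ℝ) :
    |stableKernel α t y| ≤ π⁻¹ * ∫ x in Ioi 0, exp (-(t / 2) * x ^ α) := by
  have hφ_int := integrableOn_exp_neg_mul_rpow hα (half_pos ht)
  rw [stableKernel_eq_integral_Ioi, abs_mul, abs_of_pos (inv_pos.2 pi_pos)]
  gcongr
  rw [← Real.norm_eq_abs]
  refine norm_integral_le_of_norm_le hφ_int (ae_of_all _ fun x ↦ ?_)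
  rw [norm_mul, Real.norm_of_nonneg (exp_pos _).le]
  exact mul_le_of_le_one_left (exp_pos _).le (abs_cos_le_one _)

lemma exists_abs_stableKernel_mul_sq_le {α t : ℝ} (hα : 1 < α) (ht : 0 < t) :
    ∃ C, ∀ y, |stableKernel α t y| * y ^ 2 ≤ C := by
  obtain ⟨C, hC⟩ := exists_abs_integral_Ioi_cos_mul_exp_neg_mul_rpow_mul_sq_le hα (half_pos ht)
  refine ⟨π⁻¹ * C, fun y ↦ ?_⟩
  rw [stableKernel_eq_integral_Ioi, abs_mul, abs_of_pos (inv_pos.2 pi_pos), mul_assoc]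
  gcongr
  exact hC y

lemma continuous_stableKernel {α t : ℝ} (hα : 0 < α) (ht : 0 < t) :
    Continuous (stableKernel α t) := by
  have hφ_int := integrableOn_exp_neg_mul_rpow hα (half_pos ht)
  rw [funext (stableKernel_eq_integral_Ioi α t)]
  refine continuous_const.mul (continuous_of_dominated (fun y ↦ ?_) (fun y ↦ ?_) hφ_int ?_)
  · exact (hφ_int.cos_mul y).aestronglyMeasurable
  · refine ae_of_all _ fun x ↦ ?_
    rw [norm_mul, Real.norm_of_nonneg (exp_pos _).le]
    exact mul_le_of_le_one_left (exp_pos _).le (abs_cos_le_one _)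
  · exact ae_of_all _ fun x ↦ by fun_prop

lemma integrableOn_stableKernel_sq_mul_rpow {α t q : ℝ} (hα : 1 < α) (ht : 0 < t)
    (hq : -1 < q) (hq' : q < 3) :
    IntegrableOn (fun y ↦ stableKernel α t y ^ 2 * y ^ q) (Ioi 0) := by
  have hcont : ContinuousOn (fun y ↦ stableKernel α t y ^ 2 * y ^ q) (Ioi 0) :=
    ((continuous_stableKernel (by linarith) ht).pow 2).continuousOn.mul
      (continuousOn_id.rpow_const fun y hy ↦ Or.inl (ne_of_gt hy))
  obtain ⟨A, hA⟩ : ∃ A, ∀ y, |stableKernel α t y| ≤ A :=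
    ⟨_, abs_stableKernel_le (by linarith) ht⟩
  obtain ⟨B, hB⟩ := exists_abs_stableKernel_mul_sq_le hα ht
  rw [← Ioc_union_Ioi_eq_Ioi zero_le_one]
  refine IntegrableOn.union ?_ ?_
  · refine Integrable.mono' ((intervalIntegral.intervalIntegrable_rpow' hq).1.const_mul (A ^ 2))
      ((hcont.mono Ioc_subset_Ioi_self).aestronglyMeasurable measurableSet_Ioc)
      ((ae_restrict_iff' measurableSet_Ioc).2 (ae_of_all _ fun y hy ↦ ?_))
    have hyq := rpow_pos_of_pos hy.1 q
    rw [norm_mul, Real.norm_of_nonneg (sq_nonneg _), Real.norm_of_nonneg hyq.le, ← sq_abs]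
    gcongr
    exact hA y
  · refine Integrable.mono'
      ((integrableOn_Ioi_rpow_of_lt (by linarith : q - 4 < -1) one_pos).const_mul (B ^ 2))
      ((hcont.mono (Ioi_subset_Ioi zero_le_one)).aestronglyMeasurable measurableSet_Ioi)
      ((ae_restrict_iff' measurableSet_Ioi).2 (ae_of_all _ fun y hy ↦ ?_))
    have hy0 : (0 : ℝ) < y := one_pos.trans hy
    have hyq : y ^ q = (y ^ 2) ^ 2 * y ^ (q - 4) := by
      rw [← rpow_natCast, ← rpow_natCast, ← rpow_mul hy0.le, ← rpow_add hy0]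
      norm_num
    rw [norm_mul, Real.norm_of_nonneg (sq_nonneg _),
      Real.norm_of_nonneg (rpow_pos_of_pos hy0 _).le]
    calc stableKernel α t y ^ 2 * y ^ q = (|stableKernel α t y| * y ^ 2) ^ 2 * y ^ (q - 4) := by
          rw [hyq, mul_pow, sq_abs]; ring
      _ ≤ B ^ 2 * y ^ (q - 4) := by gcongr; exact hB y

lemma setIntegral_Ioi_stableKernel_sq_mul_rpow {α s : ℝ} (hα : α ≠ 0) (hs : 0 < s)
    (q : ℝ) :
    ∫ y in Ioi 0, stableKernel α s y ^ 2 * y ^ q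
      = s ^ ((q - 1) / α) * ∫ u in Ioi 0, stableKernel α 1 u ^ 2 * u ^ q := by
  set c := s ^ (-1 / α)
  have hc : 0 < c := rpow_pos_of_pos hs _
  have h_subst := integral_comp_mul_left_Ioi (fun u ↦ stableKernel α 1 u ^ 2 * u ^ q) 0 hc
  rw [mul_zero, smul_eq_mul] at h_subst
  have h_integrand : ∀ y ∈ Ioi (0 : ℝ), stableKernel α s y ^ 2 * y ^ q
      = c ^ (2 - q) * (stableKernel α 1 (c * y) ^ 2 * (c * y) ^ q) := fun y hy ↦ by
    have hcq : c ^ q ≠ 0 := (rpow_pos_of_pos hc q).ne'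
    rw [stableKernel_eq_rpow_mul_stableKernel_one hα hs, mul_rpow hc.le hy.le, rpow_sub hc,
      rpow_two]
    field
  rw [setIntegral_congr_fun measurableSet_Ioi h_integrand, integral_const_mul, h_subst,
    ← mul_assoc, ← rpow_neg_one, ← rpow_add hc, ← rpow_mul hs.le]
  congr 2
  field_simp
  ring

lemma setIntegral_Ioc_stableKernel_sq_mul_rpow_le {α s q : ℝ} (hα : 1 < α) (hs : 0 < s)
    (hq : -1 < q) (hq' : q < 3) :
    ∫ y in Ioc 0 1, stableKernel α s y ^ 2 * y ^ q
      ≤ s ^ ((q - 1) / α) * ∫ u in Ioi 0, stableKernel α 1 u ^ 2 * u ^ q := by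
  rw [← setIntegral_Ioi_stableKernel_sq_mul_rpow (by linarith) hs]
  refine setIntegral_mono_set (integrableOn_stableKernel_sq_mul_rpow hα hs hq hq')
    ((ae_restrict_iff' measurableSet_Ioi).2 (ae_of_all _ fun y hy ↦ ?_))
    Ioc_subset_Ioi_self.eventuallyLE
  exact mul_nonneg (sq_nonneg _) (rpow_pos_of_pos hy _).le

/-- There is a finite constant `C` (depending only on `α`) such that for all
`ε ∈ (0,1)`: `∫₀^ε ∫₀^1 p_s(y)² y^{α−1} dy ds ≤ C ε^{2(α−1)/α}`. -/
theorem stmt_8 (α : ℝ) (hα : α ∈ Set.Ioc (1 : ℝ) 2) :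
    ∃ C : ℝ, ∀ ε ∈ Set.Ioo (0 : ℝ) 1,
      (∫ s in Set.Ioc (0 : ℝ) ε, ∫ y in Set.Ioc (0 : ℝ) 1,
          (stableKernel α s y) ^ 2 * y ^ (α - 1))
        ≤ C * ε ^ (2 * (α - 1) / α) := by
  obtain ⟨hα1, hα2⟩ := hα
  have hα0 : 0 < α := by linarith
  set M := ∫ u in Ioi 0, stableKernel α 1 u ^ 2 * u ^ (α - 1)
  have hr : -1 < (α - 2) / α := by rw [lt_div_iff₀ hα0]; linarith
  have hr1 : (α - 2) / α + 1 = 2 * (α - 1) / α := by field_simp; ring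
  refine ⟨M / (2 * (α - 1) / α), fun ε hε ↦ ?_⟩
  calc (∫ s in Ioc 0 ε, ∫ y in Ioc 0 1, stableKernel α s y ^ 2 * y ^ (α - 1))
      ≤ ∫ s in Ioc 0 ε, s ^ ((α - 2) / α) * M := by
        refine integral_mono_of_nonneg ?_
          ((intervalIntegral.intervalIntegrable_rpow' hr).1.mul_const M)
          ((ae_restrict_iff' measurableSet_Ioc).2 (ae_of_all _ fun s hs ↦ ?_))
        · exact ae_of_all _ fun s ↦ setIntegral_nonneg measurableSet_Ioc fun y hy ↦
            mul_nonneg (sq_nonneg _) (rpow_pos_of_pos hy.1 _).le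
        · have h := setIntegral_Ioc_stableKernel_sq_mul_rpow_le (q := α - 1) hα1 hs.1
            (by linarith) (by linarith)
          rwa [sub_sub, one_add_one_eq_two] at h
    _ = M / (2 * (α - 1) / α) * ε ^ (2 * (α - 1) / α) := by
        rw [integral_mul_const, setIntegral_Ioc_zero_rpow hr hε.1.le, hr1]
        ring
end

section
/- Fix a ∈ (0,1). There exists a finite constant C (depending only on α and a) such that for all ε ∈ (0,1): ∫₀^∞ ( min(1, ε² ξ^{2α}) ) e^{−2 ε^a ξ^α} (1 + ξ^α)^{−1} dξ ≤ C ε^{(2α − a − aα)/α}. -/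
open MeasureTheory Real

/-!
Since `min 1 (c x²) / (1 + x) ≤ c x` for `x ≥ 0`, the integrand is at most
`ε² ξ^α e^{-2ε^a ξ^α}`, whose integral over `(0, ∞)` is the Gamma integral
`ε² (2ε^a)^{-(α+1)/α} Γ((α+1)/α) / α`, and `ε² ε^{-a(α+1)/α} = ε^{(2α − a − aα)/α}`.
-/

lemma min_one_mul_sq_div_one_add_le {c x : ℝ} (hc : 0 ≤ c) (hx : 0 ≤ x) :
    min 1 (c * x ^ 2) / (1 + x) ≤ c * x := by
  have hx1 : 0 < 1 + x := by linarith
  rw [div_le_iff₀ hx1]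
  calc min 1 (c * x ^ 2) ≤ c * x ^ 2 := min_le_right _ _
    _ ≤ c * x * (1 + x) := by nlinarith [mul_nonneg hc hx]

lemma setIntegral_min_one_mul_rpow_mul_exp_div_le {α b c : ℝ} (hα : 0 < α) (hb : 0 < b)
    (hc : 0 ≤ c) :
    ∫ ξ in Set.Ioi (0 : ℝ), min 1 (c * ξ ^ (2 * α)) * exp (-(b * ξ ^ α)) / (1 + ξ ^ α)
      ≤ c * (b ^ (-(α + 1) / α) * (1 / α) * Gamma ((α + 1) / α)) := by
  rw [← integral_rpow_mul_exp_neg_mul_rpow hα (by linarith) hb, ← integral_const_mul]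
  refine integral_mono_of_nonneg ?_
    ((integrableOn_rpow_mul_exp_neg_mul_rpow (by linarith) hα hb).const_mul c) ?_
  · filter_upwards [ae_restrict_mem measurableSet_Ioi] with ξ (hξ : 0 < ξ)
    positivity
  · filter_upwards [ae_restrict_mem measurableSet_Ioi] with ξ (hξ : 0 < ξ)
    have hξα : 0 ≤ ξ ^ α := rpow_nonneg hξ.le α
    have hsq : ξ ^ (2 * α) = (ξ ^ α) ^ 2 := by
      rw [mul_comm, rpow_mul hξ.le, rpow_two]
    calc min 1 (c * ξ ^ (2 * α)) * exp (-(b * ξ ^ α)) / (1 + ξ ^ α)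
        = min 1 (c * (ξ ^ α) ^ 2) / (1 + ξ ^ α) * exp (-(b * ξ ^ α)) := by
          rw [hsq, mul_div_right_comm]
      _ ≤ c * ξ ^ α * exp (-(b * ξ ^ α)) := by
          gcongr
          exact min_one_mul_sq_div_one_add_le hc hξα
      _ = c * (ξ ^ α * exp (-b * ξ ^ α)) := by
          rw [neg_mul, mul_assoc]

lemma sq_mul_two_mul_rpow_rpow {α a ε : ℝ} (hα : α ≠ 0) (hε : 0 < ε) :
    ε ^ 2 * (2 * ε ^ a) ^ (-(α + 1) / α)
      = 2 ^ (-(α + 1) / α) * ε ^ ((2 * α - a - a * α) / α) := by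
  have hexp : (2 : ℝ) + a * (-(α + 1) / α) = (2 * α - a - a * α) / α := by
    field_simp
    ring
  rw [mul_rpow zero_le_two (rpow_nonneg hε.le a), ← rpow_mul hε.le, ← hexp,
    rpow_add hε, rpow_two]
  ring

theorem stmt_12_general (α : ℝ) (hα : α ∈ Set.Ioc (1 : ℝ) 2)
    (a : ℝ) :
    ∃ C : ℝ, ∀ ε ∈ Set.Ioo (0 : ℝ) 1,
      (∫ ξ in Set.Ioi (0 : ℝ),
          min 1 (ε ^ 2 * ξ ^ (2 * α)) * Real.exp (-(2 * ε ^ a * ξ ^ α))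
            / (1 + ξ ^ α))
        ≤ C * ε ^ ((2 * α - a - a * α) / α) := by
  have hα0 : 0 < α := by linarith [hα.1]
  refine ⟨2 ^ (-(α + 1) / α) * (1 / α) * Gamma ((α + 1) / α), ?_⟩
  rintro ε ⟨hε, -⟩
  calc _ ≤ ε ^ 2 * ((2 * ε ^ a) ^ (-(α + 1) / α) * (1 / α) * Gamma ((α + 1) / α)) :=
        setIntegral_min_one_mul_rpow_mul_exp_div_le hα0 (by positivity) (by positivity)
    _ = ε ^ 2 * (2 * ε ^ a) ^ (-(α + 1) / α) * (1 / α) * Gamma ((α + 1) / α) := by ring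
    _ = _ := by rw [sq_mul_two_mul_rpow_rpow hα0.ne' hε]; ring

/-- For fixed `a ∈ (0,1)` there is a finite constant `C` (depending only on `α`
and `a`) such that for all `ε ∈ (0,1)`:
`∫₀^∞ min(1, ε²ξ^{2α}) e^{−2ε^a ξ^α} (1 + ξ^α)⁻¹ dξ ≤ C ε^{(2α − a − aα)/α}`. -/
theorem stmt_12 (α : ℝ) (hα : α ∈ Set.Ioc (1 : ℝ) 2)
    (a : ℝ) (ha : a ∈ Set.Ioo (0 : ℝ) 1) :
    ∃ C : ℝ, ∀ ε ∈ Set.Ioo (0 : ℝ) 1,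
      (∫ ξ in Set.Ioi (0 : ℝ),
          min 1 (ε ^ 2 * ξ ^ (2 * α)) * Real.exp (-(2 * ε ^ a * ξ ^ α))
            / (1 + ξ ^ α))
        ≤ C * ε ^ ((2 * α - a - a * α) / α) :=
  stmt_12_general α hα a
end

section
/- Fix a ∈ (0,1). There exists a finite constant C (depending only on α and a) such that for all ε ∈ (0,1): ∫₀^{ε^a} s^{(α−1)/α} ( ∫_ℝ ( p_{s+ε}(y) − p_s(y) )² dy ) ds ≤ C ε^{2a(α−1)/α}. -/
open MeasureTheory Real

/-!
With `θ = (α - 1) / α` and `g = p̂_s - p̂_{s+ε}` (where `p̂_t(ξ) = e^{-t|ξ|^α/2}`), the difference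
`p_{s+ε} - p_s` is `-(2π)⁻¹` times the cosine transform of `g`. Since `0 ≤ g ≤ 1`, a
Plancherel-type inequality gives `∫ (p_{s+ε} - p_s)² ≤ (2π)⁻¹ ∫ g`; it is proved by mollifying with
`e^{-δy²}`, whose cosine transforms are explicit Gaussians of total mass `2π`, and letting `δ → 0`.
The elementary bound `1 - e^{-x} ≤ x^θ` gives `g(ξ) ≤ ε^θ |ξ|^{α-1} p̂_s(ξ)`, whose integral is
`4 ε^θ / (α s)`. So the outer integrand is `O(ε^θ s^{θ-1})`, and integrating up to `r = ε^a` gives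
`O(ε^θ r^θ) = O(ε^{(1+a)θ})`, which is at most `O(ε^{2aθ})` because `a < 1`.
-/

open Set Filter Topology

theorem integrable_comp_abs_of_integrableOn_Ioi {f : ℝ → ℝ} (hf : IntegrableOn f (Ioi 0)) :
    Integrable fun x ↦ f |x| := by
  have hIoi : IntegrableOn (fun x ↦ f |x|) (Ioi 0) :=
    hf.congr_fun (fun x hx ↦ by rw [abs_of_pos hx]) measurableSet_Ioi
  have hIic : IntegrableOn (fun x ↦ f |x|) (Iic 0) := by
    have hneg : MeasurableEmbedding fun x : ℝ ↦ -x := (Homeomorph.neg ℝ).measurableEmbedding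
    rw [← Measure.map_neg_eq_self (volume : Measure ℝ), hneg.integrableOn_map_iff]
    simp_rw [Function.comp_def, abs_neg, neg_preimage, neg_Iic, neg_zero]
    exact (integrableOn_Ici_iff_integrableOn_Ioi).mpr hIoi
  simpa [← integrableOn_univ, Iic_union_Ioi] using hIic.union hIoi

theorem integrable_abs_rpow_mul_exp_neg_mul_abs_rpow {p q b : ℝ} (hp : 0 < p) (hq : -1 < q)
    (hb : 0 < b) : Integrable fun x : ℝ ↦ |x| ^ q * exp (-b * |x| ^ p) :=
  integrable_comp_abs_of_integrableOn_Ioi (integrableOn_rpow_mul_exp_neg_mul_rpow hq hp hb)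

theorem integral_abs_rpow_sub_one_mul_exp_neg_mul_abs_rpow {p b : ℝ} (hp : 0 < p) (hb : 0 < b) :
    ∫ x : ℝ, |x| ^ (p - 1) * exp (-b * |x| ^ p) = 2 / (p * b) := by
  rw [integral_comp_abs (f := fun x ↦ x ^ (p - 1) * exp (-b * x ^ p)),
    integral_rpow_mul_exp_neg_mul_rpow hp (by linarith) hb]
  rw [show (p - 1 + 1) / p = 1 by field_simp; ring, show -(p - 1 + 1) / p = -1 by field_simp; ring,
    Gamma_one, rpow_neg_one]
  field_simp

theorem one_sub_exp_neg_le_rpow {θ x : ℝ} (hθ0 : 0 ≤ θ) (hθ1 : θ ≤ 1) (hx : 0 ≤ x) :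
    1 - exp (-x) ≤ x ^ θ := by
  rcases le_or_gt x 1 with hx1 | hx1
  · have := rpow_le_rpow_of_exponent_ge' hx hx1 hθ0 hθ1
    rw [rpow_one] at this
    linarith [add_one_le_exp (-x)]
  · have := rpow_le_rpow_of_exponent_le hx1.le hθ0
    rw [rpow_zero] at this
    linarith [exp_pos (-x)]

/-- The Fourier transform `p̂_t` of `stableKernel α t`. -/
noncomputable def stableSymbol (α t ξ : ℝ) : ℝ := exp (-(t * |ξ| ^ α) / 2)

theorem stableKernel_eq (α t x : ℝ) :
    stableKernel α t x = (2 * π)⁻¹ * ∫ ξ, cos (ξ * x) * stableSymbol α t ξ := rfl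

section StableSymbol

variable {α s t : ℝ}

theorem stableSymbol_eq (α t ξ : ℝ) : stableSymbol α t ξ = exp (-(t / 2) * |ξ| ^ α) := by
  rw [stableSymbol]; ring_nf

theorem continuous_stableSymbol (hα : 0 < α) (t : ℝ) : Continuous (stableSymbol α t) := by
  unfold stableSymbol
  have := continuous_abs.rpow_const fun _ ↦ Or.inr hα.le
  fun_prop

theorem stableSymbol_le_one (ht : 0 ≤ t) (ξ : ℝ) : stableSymbol α t ξ ≤ 1 := by
  rw [stableSymbol, exp_le_one_iff]
  have : 0 ≤ t * |ξ| ^ α := by positivity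
  linarith

theorem stableSymbol_le_of_le (hst : s ≤ t) (ξ : ℝ) : stableSymbol α t ξ ≤ stableSymbol α s ξ := by
  unfold stableSymbol
  gcongr

theorem integrable_stableSymbol (hα : 0 < α) (ht : 0 < t) : Integrable (stableSymbol α t) := by
  have h := integrable_abs_rpow_mul_exp_neg_mul_abs_rpow (q := 0) hα (by norm_num) (half_pos ht)
  simpa only [rpow_zero, one_mul, ← stableSymbol_eq] using h

theorem integrable_abs_rpow_sub_one_mul_stableSymbol (hα : 0 < α) (ht : 0 < t) :
    Integrable fun ξ ↦ |ξ| ^ (α - 1) * stableSymbol α t ξ := by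
  have h := integrable_abs_rpow_mul_exp_neg_mul_abs_rpow (q := α - 1) hα (by linarith) (half_pos ht)
  simpa only [← stableSymbol_eq] using h

theorem integral_abs_rpow_sub_one_mul_stableSymbol (hα : 0 < α) (ht : 0 < t) :
    ∫ ξ, |ξ| ^ (α - 1) * stableSymbol α t ξ = 4 / (α * t) := by
  simp_rw [stableSymbol_eq]
  rw [integral_abs_rpow_sub_one_mul_exp_neg_mul_abs_rpow hα (half_pos ht)]
  field_simp
  ring

theorem stableSymbol_sub_le (hα : 1 ≤ α) (s : ℝ) {ε : ℝ} (hε : 0 ≤ ε) (ξ : ℝ) :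
    stableSymbol α s ξ - stableSymbol α (s + ε) ξ
      ≤ ε ^ ((α - 1) / α) * (|ξ| ^ (α - 1) * stableSymbol α s ξ) := by
  have hα0 : 0 < α := by linarith
  have hfactor : stableSymbol α s ξ - stableSymbol α (s + ε) ξ
      = stableSymbol α s ξ * (1 - exp (-(ε * |ξ| ^ α / 2))) := by
    simp only [stableSymbol, mul_sub, mul_one, ← exp_add]; ring_nf
  set r := |ξ| ^ α
  have hθ1 : (α - 1) / α ≤ 1 := by rw [div_le_one hα0]; linarith
  have hr : r ^ ((α - 1) / α) = |ξ| ^ (α - 1) := by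
    rw [← rpow_mul (abs_nonneg ξ)]; congr 1; field_simp
  calc stableSymbol α s ξ - stableSymbol α (s + ε) ξ
      ≤ stableSymbol α s ξ * (ε * r) ^ ((α - 1) / α) := by
        rw [hfactor]
        gcongr
        · exact (exp_pos _).le
        calc 1 - exp (-(ε * r / 2)) ≤ (ε * r / 2) ^ ((α - 1) / α) :=
              one_sub_exp_neg_le_rpow (by positivity) hθ1 (by positivity)
          _ ≤ (ε * r) ^ ((α - 1) / α) := by gcongr; linarith [show 0 ≤ ε * r by positivity]
    _ = ε ^ ((α - 1) / α) * (|ξ| ^ (α - 1) * stableSymbol α s ξ) := by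
        rw [mul_rpow hε (by positivity), hr]; ring

end StableSymbol

/-- The Fourier transform of `y ↦ exp (-δ y²)`. -/
noncomputable def gaussianHat (δ u : ℝ) : ℝ := √(π / δ) * exp (-u ^ 2 / (4 * δ))

section GaussianHat

variable {δ : ℝ}

theorem gaussianHat_nonneg (δ u : ℝ) : 0 ≤ gaussianHat δ u := by
  unfold gaussianHat; positivity

@[fun_prop]
theorem continuous_gaussianHat (δ : ℝ) : Continuous (gaussianHat δ) := by
  unfold gaussianHat; fun_prop

theorem gaussianHat_eq (δ u : ℝ) : gaussianHat δ u = √(π / δ) * exp (-(4 * δ)⁻¹ * u ^ 2) := by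
  rw [gaussianHat]; ring_nf

theorem integrable_gaussianHat (hδ : 0 < δ) : Integrable (gaussianHat δ) := by
  simp_rw [funext (gaussianHat_eq δ)]
  exact (integrable_exp_neg_mul_sq (by positivity)).const_mul _

theorem integral_gaussianHat (hδ : 0 < δ) : ∫ u, gaussianHat δ u = 2 * π := by
  simp_rw [gaussianHat_eq]
  rw [integral_const_mul, integral_gaussian, ← sqrt_mul (by positivity),
    show π / δ * (π / (4 * δ)⁻¹) = (2 * π) ^ 2 by field_simp; ring, sqrt_sq (by positivity)]

theorem integral_cos_mul_exp_neg_mul_sq (hδ : 0 < δ) (u : ℝ) :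
    ∫ y, cos (u * y) * exp (-δ * y ^ 2) = gaussianHat δ u := by
  have hδ' : 0 < (δ : ℂ).re := by simpa using hδ
  have hint : Integrable fun y : ℝ ↦ Complex.exp (Complex.I * u * y) * Complex.exp (-δ * y ^ 2) :=
    (integrable_cexp_quadratic hδ' (Complex.I * u) 0).congr
      (ae_of_all _ fun y ↦ by dsimp only; rw [← Complex.exp_add]; congr 1; ring)
  have hre (y : ℝ) : (Complex.exp (Complex.I * u * y) * Complex.exp (-δ * y ^ 2)).re
      = cos (u * y) * exp (-δ * y ^ 2) := by
    rw [show Complex.I * u * y = ((u * y : ℝ) : ℂ) * Complex.I by push_cast; ring,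
      show -(δ : ℂ) * y ^ 2 = ((-δ * y ^ 2 : ℝ) : ℂ) by push_cast; ring, ← Complex.ofReal_exp,
      Complex.re_mul_ofReal, Complex.exp_ofReal_mul_I_re]
  have hhat : ((π : ℂ) / δ) ^ (1 / 2 : ℂ) * Complex.exp (-(u : ℂ) ^ 2 / (4 * δ))
      = (gaussianHat δ u : ℂ) := by
    rw [gaussianHat, sqrt_eq_rpow, Complex.ofReal_mul, Complex.ofReal_exp,
      Complex.ofReal_cpow (by positivity)]
    push_cast; ring_nf
  simp_rw [← hre]
  refine (integral_re hint).trans ?_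
  rw [fourierIntegral_gaussian hδ', hhat, RCLike.re_to_complex, Complex.ofReal_re]

theorem integral_cos_mul_cos_mul_exp_neg_mul_sq (hδ : 0 < δ) (ξ η : ℝ) :
    ∫ y, cos (ξ * y) * cos (η * y) * exp (-δ * y ^ 2)
      = (gaussianHat δ (ξ - η) + gaussianHat δ (ξ + η)) / 2 := by
  have hint (u : ℝ) : Integrable fun y ↦ cos (u * y) * exp (-δ * y ^ 2) :=
    (integrable_exp_neg_mul_sq hδ).bdd_mul (by fun_prop) (c := 1)
      (ae_of_all _ fun y ↦ by simpa using abs_cos_le_one (u * y))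
  have hprod (y : ℝ) : cos (ξ * y) * cos (η * y) * exp (-δ * y ^ 2)
      = (cos ((ξ - η) * y) * exp (-δ * y ^ 2) + cos ((ξ + η) * y) * exp (-δ * y ^ 2)) / 2 := by
    rw [sub_mul, add_mul, cos_sub, cos_add]; ring
  simp_rw [hprod]
  rw [integral_div, integral_add (hint _) (hint _), integral_cos_mul_exp_neg_mul_sq hδ,
    integral_cos_mul_exp_neg_mul_sq hδ]

theorem integrable_gaussianHat_sub_add (hδ : 0 < δ) (η : ℝ) :
    Integrable fun ξ ↦ (gaussianHat δ (ξ - η) + gaussianHat δ (ξ + η)) / 2 :=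
  (((integrable_gaussianHat hδ).comp_sub_right η).add
    ((integrable_gaussianHat hδ).comp_add_right η)).div_const 2

theorem integral_gaussianHat_sub_add (hδ : 0 < δ) (η : ℝ) :
    ∫ ξ, (gaussianHat δ (ξ - η) + gaussianHat δ (ξ + η)) / 2 = 2 * π := by
  rw [integral_div, integral_add ((integrable_gaussianHat hδ).comp_sub_right η)
    ((integrable_gaussianHat hδ).comp_add_right η), integral_sub_right_eq_self (gaussianHat δ),
    integral_add_right_eq_self (gaussianHat δ), integral_gaussianHat hδ]
  ring

end GaussianHat

theorem integral_le_of_forall_integral_exp_neg_mul_sq_mul_le {D : ℝ → ℝ} {M : ℝ} (hD0 : 0 ≤ D)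
    (hDm : AEMeasurable D) (hint : ∀ δ > 0, Integrable fun y ↦ exp (-δ * y ^ 2) * D y)
    (hle : ∀ δ > 0, ∫ y, exp (-δ * y ^ 2) * D y ≤ M) :
    ∫ y, D y ≤ M := by
  have hM : 0 ≤ M :=
    (integral_nonneg fun y ↦ mul_nonneg (exp_pos _).le (hD0 y)).trans (hle 1 one_pos)
  rw [integral_eq_lintegral_of_nonneg_ae (ae_of_all _ hD0) hDm.aestronglyMeasurable]
  refine ENNReal.toReal_le_of_le_ofReal hM ?_
  have hmono (y : ℝ) :
      Monotone fun n : ℕ ↦ ENNReal.ofReal (exp (-(1 / (n + 1 : ℝ)) * y ^ 2) * D y) := by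
    intro m n hmn
    refine ENNReal.ofReal_le_ofReal (mul_le_mul_of_nonneg_right ?_ (hD0 y))
    gcongr
  have htendsto (y : ℝ) :
      Tendsto (fun n : ℕ ↦ ENNReal.ofReal (exp (-(1 / (n + 1 : ℝ)) * y ^ 2) * D y)) atTop
        (𝓝 (ENNReal.ofReal (D y))) := by
    refine (ENNReal.continuous_ofReal.tendsto _).comp ?_
    simpa using
      ((tendsto_one_div_add_atTop_nhds_zero_nat.neg.mul_const (y ^ 2)).rexp).mul_const (D y)
  refine le_of_tendsto' (lintegral_tendsto_of_tendsto_of_monotone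
    (fun n ↦ (hint _ (by positivity)).aemeasurable.ennreal_ofReal) (ae_of_all _ hmono)
    (ae_of_all _ htendsto)) fun n ↦ ?_
  rw [← ofReal_integral_eq_lintegral_ofReal (hint _ (by positivity))
    (ae_of_all _ fun y ↦ mul_nonneg (exp_pos _).le (hD0 y))]
  exact ENNReal.ofReal_le_ofReal (hle _ (by positivity))

section CosineTransform

variable {g : ℝ → ℝ}

theorem integral_exp_neg_mul_sq_mul_sq_integral_cos_mul (hg : Continuous g) (hgi : Integrable g)
    {δ : ℝ} (hδ : 0 < δ) :
    ∫ y, exp (-δ * y ^ 2) * (∫ ξ, cos (ξ * y) * g ξ) ^ 2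
      = ∫ p : ℝ × ℝ, g p.1 * g p.2 *
          ((gaussianHat δ (p.1 - p.2) + gaussianHat δ (p.1 + p.2)) / 2) := by
  set F : ℝ → ℝ × ℝ → ℝ :=
    fun y p ↦ cos (p.1 * y) * cos (p.2 * y) * exp (-δ * y ^ 2) * (g p.1 * g p.2)
  have hFi : Integrable (Function.uncurry F) (volume.prod volume) := by
    refine ((integrable_exp_neg_mul_sq hδ).mul_prod (hgi.norm.mul_prod hgi.norm)).mono'
      (by fun_prop) (ae_of_all _ fun q ↦ ?_)
    simp only [Function.uncurry, F, norm_mul, norm_eq_abs, abs_of_pos (exp_pos _)]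
    have hcos : |cos (q.2.1 * q.1)| * |cos (q.2.2 * q.1)| ≤ 1 :=
      mul_le_one₀ (abs_cos_le_one _) (abs_nonneg _) (abs_cos_le_one _)
    rw [mul_assoc]
    exact mul_le_of_le_one_left (by positivity) hcos
  have hsq (y : ℝ) : exp (-δ * y ^ 2) * (∫ ξ, cos (ξ * y) * g ξ) ^ 2 = ∫ p, F y p := by
    rw [sq (∫ ξ, cos (ξ * y) * g ξ), ← integral_prod_mul, ← Measure.volume_eq_prod,
      ← integral_const_mul]
    congr 1 with p
    ring
  simp_rw [hsq]
  rw [integral_integral_swap hFi]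
  congr 1 with p
  rw [integral_mul_const, integral_cos_mul_cos_mul_exp_neg_mul_sq hδ, mul_comm]

theorem integral_mul_mul_gaussianHat_le (hg : Continuous g) (hgi : Integrable g) (hg0 : 0 ≤ g)
    (hg1 : g ≤ 1) {δ : ℝ} (hδ : 0 < δ) :
    ∫ p : ℝ × ℝ, g p.1 * g p.2 * ((gaussianHat δ (p.1 - p.2) + gaussianHat δ (p.1 + p.2)) / 2)
      ≤ 2 * π * ∫ ξ, g ξ := by
  set K : ℝ × ℝ → ℝ := fun p ↦ (gaussianHat δ (p.1 - p.2) + gaussianHat δ (p.1 + p.2)) / 2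
  have hK0 (p : ℝ × ℝ) : 0 ≤ K p := by
    have := gaussianHat_nonneg δ (p.1 - p.2)
    have := gaussianHat_nonneg δ (p.1 + p.2)
    positivity
  have hslice (η : ℝ) : ∫ ξ, g η * K (ξ, η) = 2 * π * g η := by
    rw [integral_const_mul, integral_gaussianHat_sub_add hδ, mul_comm]
  have hbound : Integrable fun p : ℝ × ℝ ↦ g p.2 * K p := by
    rw [Measure.volume_eq_prod, integrable_prod_iff' (by simp only [K]; fun_prop)]
    refine ⟨ae_of_all _ fun η ↦ (integrable_gaussianHat_sub_add hδ η).const_mul (g η), ?_⟩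
    refine ((hgi.const_mul (2 * π)).congr (ae_of_all _ fun η ↦ ?_))
    simp only [norm_mul, norm_eq_abs, abs_of_nonneg (hg0 η), abs_of_nonneg (hK0 _)]
    exact (hslice η).symm
  -- `g ≤ 1` removes the factor `g ξ`, after which the `ξ`-integral of the kernel is `2π`.
  calc ∫ p : ℝ × ℝ, g p.1 * g p.2 * K p
      ≤ ∫ p : ℝ × ℝ, g p.2 * K p := by
        refine integral_mono_of_nonneg (ae_of_all _ fun p ↦ ?_) hbound (ae_of_all _ fun p ↦ ?_)
        · exact mul_nonneg (mul_nonneg (hg0 _) (hg0 _)) (hK0 p)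
        · exact mul_le_mul_of_nonneg_right (mul_le_of_le_one_left (hg0 _) (hg1 _)) (hK0 p)
    _ = 2 * π * ∫ ξ, g ξ := by
        rw [Measure.volume_eq_prod] at hbound ⊢
        rw [integral_prod_symm _ hbound]
        simp_rw [hslice]
        exact integral_const_mul _ _

theorem integral_sq_integral_cos_mul_le (hg : Continuous g) (hgi : Integrable g) (hg0 : 0 ≤ g)
    (hg1 : g ≤ 1) :
    ∫ y, (∫ ξ, cos (ξ * y) * g ξ) ^ 2 ≤ 2 * π * ∫ ξ, g ξ := by
  have hdom (y ξ : ℝ) : ‖cos (ξ * y) * g ξ‖ ≤ g ξ := by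
    rw [norm_mul, norm_eq_abs, norm_eq_abs, abs_of_nonneg (hg0 ξ)]
    exact mul_le_of_le_one_left (hg0 ξ) (abs_cos_le_one _)
  have hcont : Continuous fun y ↦ ∫ ξ, cos (ξ * y) * g ξ :=
    continuous_of_dominated (fun y ↦ by fun_prop) (fun y ↦ ae_of_all _ (hdom y)) hgi
      (ae_of_all _ fun ξ ↦ by fun_prop)
  have hbdd (y : ℝ) : ‖(∫ ξ, cos (ξ * y) * g ξ) ^ 2‖ ≤ (∫ ξ, g ξ) ^ 2 := by
    rw [norm_pow]
    gcongr
    exact norm_integral_le_of_norm_le hgi (ae_of_all _ (hdom y))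
  refine integral_le_of_forall_integral_exp_neg_mul_sq_mul_le (fun y ↦ sq_nonneg _)
    (hcont.pow 2).aemeasurable (fun δ hδ ↦ ?_) (fun δ hδ ↦ ?_)
  · exact (integrable_exp_neg_mul_sq hδ).mul_bdd (hcont.pow 2).aestronglyMeasurable
      (ae_of_all _ hbdd)
  · rw [integral_exp_neg_mul_sq_mul_sq_integral_cos_mul hg hgi hδ]
    exact integral_mul_mul_gaussianHat_le hg hgi hg0 hg1 hδ

end CosineTransform

theorem integrableOn_Ioc_zero_rpow_sub_one {θ : ℝ} (hθ : 0 < θ) (r : ℝ) :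
    IntegrableOn (fun s : ℝ ↦ s ^ (θ - 1)) (Ioc 0 r) :=
  (intervalIntegral.intervalIntegrable_rpow' (by linarith)).1

theorem integral_Ioc_zero_rpow_sub_one {θ r : ℝ} (hθ : 0 < θ) (hr : 0 ≤ r) :
    ∫ s in Ioc 0 r, s ^ (θ - 1) = r ^ θ / θ := by
  rw [← intervalIntegral.integral_of_le hr, integral_rpow (Or.inl (by linarith)),
    sub_add_cancel, zero_rpow hθ.ne', sub_zero]

theorem integral_sq_stableKernel_sub_le {α s ε : ℝ} (hα : 1 ≤ α) (hs : 0 < s) (hε : 0 ≤ ε) :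
    ∫ y, (stableKernel α (s + ε) y - stableKernel α s y) ^ 2
      ≤ 2 * ε ^ ((α - 1) / α) / (π * α * s) := by
  have hα0 : 0 < α := by linarith
  set g : ℝ → ℝ := fun ξ ↦ stableSymbol α s ξ - stableSymbol α (s + ε) ξ
  have hgi : Integrable g :=
    (integrable_stableSymbol hα0 hs).sub (integrable_stableSymbol hα0 (by linarith))
  have hcos {t : ℝ} (ht : 0 < t) (y : ℝ) : Integrable fun ξ ↦ cos (ξ * y) * stableSymbol α t ξ :=
    (integrable_stableSymbol hα0 ht).bdd_mul (by fun_prop) (c := 1)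
      (ae_of_all _ fun ξ ↦ by simpa using abs_cos_le_one (ξ * y))
  have hdiff (y : ℝ) : stableKernel α (s + ε) y - stableKernel α s y
      = -((2 * π)⁻¹ * ∫ ξ, cos (ξ * y) * g ξ) := by
    rw [stableKernel_eq, stableKernel_eq, ← mul_sub,
      ← integral_sub (hcos (by linarith) y) (hcos hs y), ← mul_neg, ← integral_neg]
    congr 2 with ξ
    ring
  have hg_le : ∫ ξ, g ξ ≤ ε ^ ((α - 1) / α) * (4 / (α * s)) := by
    rw [← integral_abs_rpow_sub_one_mul_stableSymbol hα0 hs, ← integral_const_mul]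
    exact integral_mono hgi ((integrable_abs_rpow_sub_one_mul_stableSymbol hα0 hs).const_mul _)
      (stableSymbol_sub_le hα s hε)
  have hplancherel := integral_sq_integral_cos_mul_le (g := g)
    ((continuous_stableSymbol hα0 s).sub (continuous_stableSymbol hα0 (s + ε))) hgi
    (fun ξ ↦ sub_nonneg.mpr (stableSymbol_le_of_le (by linarith) ξ))
    (fun ξ ↦ by
      have := stableSymbol_le_one (α := α) hs.le ξ
      have : 0 < stableSymbol α (s + ε) ξ := exp_pos _
      simp only [g, Pi.one_apply]
      linarith)
  calc ∫ y, (stableKernel α (s + ε) y - stableKernel α s y) ^ 2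
      = (2 * π)⁻¹ ^ 2 * ∫ y, (∫ ξ, cos (ξ * y) * g ξ) ^ 2 := by
        simp_rw [hdiff, neg_sq, mul_pow]
        exact integral_const_mul _ _
    _ ≤ (2 * π)⁻¹ ^ 2 * (2 * π * (ε ^ ((α - 1) / α) * (4 / (α * s)))) := by
        gcongr
        exact hplancherel.trans (by gcongr)
    _ = 2 * ε ^ ((α - 1) / α) / (π * α * s) := by
        field_simp
        ring

theorem setIntegral_rpow_mul_integral_sq_stableKernel_sub_le {α ε r : ℝ} (hα : 1 < α)
    (hε : 0 < ε) (hr : 0 ≤ r) :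
    ∫ s in Ioc 0 r, s ^ ((α - 1) / α) * ∫ y, (stableKernel α (s + ε) y - stableKernel α s y) ^ 2
      ≤ 2 / (π * (α - 1)) * (ε ^ ((α - 1) / α) * r ^ ((α - 1) / α)) := by
  have hα0 : 0 < α := by linarith
  set θ := (α - 1) / α
  have hθ : 0 < θ := div_pos (by linarith) hα0
  have hαθ : α * θ = α - 1 := mul_div_cancel₀ _ hα0.ne'
  have hpoint : ∀ s ∈ Ioc 0 r,
      s ^ θ * ∫ y, (stableKernel α (s + ε) y - stableKernel α s y) ^ 2
        ≤ 2 * ε ^ θ / (π * α) * s ^ (θ - 1) := by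
    rintro s ⟨hs, -⟩
    calc s ^ θ * ∫ y, (stableKernel α (s + ε) y - stableKernel α s y) ^ 2
        ≤ s ^ θ * (2 * ε ^ θ / (π * α * s)) := by
          gcongr
          exact integral_sq_stableKernel_sub_le hα.le hs hε.le
      _ = 2 * ε ^ θ / (π * α) * s ^ (θ - 1) := by
          rw [rpow_sub_one hs.ne']
          field_simp
  calc (∫ s in Ioc 0 r, s ^ θ * ∫ y, (stableKernel α (s + ε) y - stableKernel α s y) ^ 2)
      ≤ ∫ s in Ioc 0 r, 2 * ε ^ θ / (π * α) * s ^ (θ - 1) := by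
        refine integral_mono_of_nonneg ?_ ((integrableOn_Ioc_zero_rpow_sub_one hθ r).const_mul _) ?_
        · filter_upwards [ae_restrict_mem measurableSet_Ioc] with s hs
          exact mul_nonneg (rpow_nonneg hs.1.le _) (integral_nonneg fun y ↦ sq_nonneg _)
        · filter_upwards [ae_restrict_mem measurableSet_Ioc] with s hs
          exact hpoint s hs
    _ = 2 / (π * (α - 1)) * (ε ^ θ * r ^ θ) := by
        rw [integral_const_mul, integral_Ioc_zero_rpow_sub_one hθ hr, ← hαθ]
        field_simp

/-- For fixed `a ∈ (0,1)` there is a finite constant `C` (depending only on `α`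
and `a`) such that for all `ε ∈ (0,1)`:
`∫₀^{ε^a} s^{(α−1)/α} (∫_ℝ (p_{s+ε}(y) − p_s(y))² dy) ds ≤ C ε^{2a(α−1)/α}`. -/
theorem stmt_15 (α : ℝ) (hα : α ∈ Set.Ioc (1 : ℝ) 2)
    (a : ℝ) (ha : a ∈ Set.Ioo (0 : ℝ) 1) :
    ∃ C : ℝ, ∀ ε ∈ Set.Ioo (0 : ℝ) 1,
      (∫ s in Set.Ioc (0 : ℝ) (ε ^ a),
          s ^ ((α - 1) / α)
            * ∫ y : ℝ, (stableKernel α (s + ε) y - stableKernel α s y) ^ 2)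
        ≤ C * ε ^ (2 * a * (α - 1) / α) := by
  obtain ⟨hα1, -⟩ := hα
  refine ⟨2 / (π * (α - 1)), fun ε ⟨hε0, hε1⟩ ↦ ?_⟩
  refine (setIntegral_rpow_mul_integral_sq_stableKernel_sub_le hα1 hε0
    (rpow_pos_of_pos hε0 a).le).trans (mul_le_mul_of_nonneg_left ?_
      (div_nonneg zero_le_two (mul_pos pi_pos (by linarith)).le))
  have hθ : 0 ≤ (α - 1) / α := div_nonneg (by linarith) (by linarith)
  rw [← rpow_mul hε0.le, ← rpow_add hε0]
  refine rpow_le_rpow_of_exponent_ge hε0 hε1.le ?_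
  rw [mul_div_assoc]
  nlinarith [ha.2]
end
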